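/- arXiv:1508.04850 — 5 statements merged into one kernel-verified Lean document; each statement's English description precedes it below -/
import Mathlib

section
/- Divergence-preserving branching bisimilarity is an equivalence relation: for all A_τ-labelled transition systems T1, T2, T3, (i) T1 ≈Δ T1; (ii) if T1 ≈Δ T2 then T2 ≈Δ T1; (iii) if T1 ≈Δ T2 and T2 ≈Δ T3 then T1 ≈Δ T3. Likewise, the relation ≈Δ on states is reflexive, symmetric, and transitive. -/
set_option autoImplicit false

universe u v w x

/-! ### Labelled transition systems.
`A` is the set of observable actions; labels are `Option A`, with `none` playing
the role of the unobservable action τ. -/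

structure LTS (A : Type u) where
  /-- the set of states -/
  S : Type v
  /-- the labelled transition relation; `step s a t` means s →a t (with `a = none` for τ) -/
  step : S → Option A → S → Prop
  /-- the initial state ↑ -/
  init : S

namespace LTS

variable {A : Type u}

/-- a τ-step -/
def TauStep (T : LTS.{u, v} A) (s t : T.S) : Prop := T.step s none t

/-- `→*` : the reflexive-transitive closure of →τ -/
def TauStar (T : LTS.{u, v} A) : T.S → T.S → Prop := Relation.ReflTransGen T.TauStep

/-- `→+` : the transitive closure of →τ -/
def TauPlus (T : LTS.{u, v} A) : T.S → T.S → Prop := Relation.TransGen T.TauStep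

/-- `s →(a) t` : either `s →a t`, or `a = τ` and `s = t` -/
def OptStep (T : LTS.{u, v} A) (s : T.S) (a : Option A) (t : T.S) : Prop :=
  T.step s a t ∨ (a = none ∧ s = t)

/-- reachability from the initial state -/
def Reachable (T : LTS.{u, v} A) (s : T.S) : Prop :=
  Relation.ReflTransGen (fun p q => ∃ a, T.step p a q) T.init s

/-- `T` is boundedly branching: there is `B : ℕ` with `|out(s)| ≤ B` for every state `s`,
where `out(s) = {(a,t) | s →a t}`. -/
def BoundedBranching (T : LTS.{u, v} A) : Prop :=
  ∃ B : ℕ, ∀ s : T.S, Cardinal.mk {p : Option A × T.S // T.step s p.1 p.2} ≤ (B : Cardinal)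

end LTS

/-- `R` is a branching bisimulation from `T1` to `T2`. -/
def IsBranchingBisim {A : Type u} (T1 : LTS.{u, v} A) (T2 : LTS.{u, w} A)
    (R : T1.S → T2.S → Prop) : Prop :=
  ∀ s1 s2, R s1 s2 →
    (∀ a s1', T1.step s1 a s1' →
      ∃ s2'' s2', T2.TauStar s2 s2'' ∧ T2.OptStep s2'' a s2' ∧ R s1 s2'' ∧ R s1' s2') ∧
    (∀ a s2', T2.step s2 a s2' →
      ∃ s1'' s1', T1.TauStar s1 s1'' ∧ T1.OptStep s1'' a s1' ∧ R s1'' s2 ∧ R s1' s2')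

/-- `R` is divergence-preserving. -/
def IsDivPres {A : Type u} (T1 : LTS.{u, v} A) (T2 : LTS.{u, w} A)
    (R : T1.S → T2.S → Prop) : Prop :=
  (∀ (f : ℕ → T1.S) (s2 : T2.S),
      (∀ i, T1.TauStep (f i) (f (i + 1))) → (∀ i, R (f i) s2) →
      ∃ s2', T2.TauPlus s2 s2' ∧ ∃ i, R (f i) s2') ∧
  (∀ (s1 : T1.S) (g : ℕ → T2.S),
      (∀ i, T2.TauStep (g i) (g (i + 1))) → (∀ i, R s1 (g i)) →
      ∃ s1', T1.TauPlus s1 s1' ∧ ∃ i, R s1' (g i))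

/-- `T1 ≈b T2` -/
def BranchingBisimilar {A : Type u} (T1 : LTS.{u, v} A) (T2 : LTS.{u, w} A) : Prop :=
  ∃ R, IsBranchingBisim T1 T2 R ∧ R T1.init T2.init

/-- `T1 ≈Δ T2` -/
def BranchingBisimilarD {A : Type u} (T1 : LTS.{u, v} A) (T2 : LTS.{u, w} A) : Prop :=
  ∃ R, IsBranchingBisim T1 T2 R ∧ IsDivPres T1 T2 R ∧ R T1.init T2.init

/-- `s1 ≈b s2` for states -/
def SBisim {A : Type u} (T1 : LTS.{u, v} A) (T2 : LTS.{u, w} A) (s1 : T1.S) (s2 : T2.S) : Prop :=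
  ∃ R, IsBranchingBisim T1 T2 R ∧ R s1 s2

/-- `s1 ≈Δ s2` for states -/
def SBisimD {A : Type u} (T1 : LTS.{u, v} A) (T2 : LTS.{u, w} A) (s1 : T1.S) (s2 : T2.S) : Prop :=
  ∃ R, IsBranchingBisim T1 T2 R ∧ IsDivPres T1 T2 R ∧ R s1 s2

/-- `R` is a bisimulation up to ≈b from `T1` to `T2`. -/
def IsBisimUpTo {A : Type u} (T1 : LTS.{u, v} A) (T2 : LTS.{u, w} A)
    (R : T1.S → T2.S → Prop) : Prop :=
  ∀ s1 s2, R s1 s2 →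
    (∀ a s1'' s1', T1.TauStar s1 s1'' → T1.step s1'' a s1' →
        SBisim T1 T1 s1 s1'' → (a ≠ none ∨ ¬ SBisim T1 T1 s1'' s1') →
        ∃ s2', T2.step s2 a s2' ∧
          (∃ u, SBisim T1 T1 s1'' u ∧ R u s2) ∧
          (∃ u, SBisim T1 T1 s1' u ∧ R u s2')) ∧
    (∀ a s2', T2.step s2 a s2' →
        ∃ s1'' s1', T1.TauStar s1 s1'' ∧ T1.step s1'' a s1' ∧ SBisim T1 T1 s1'' s1 ∧
          (∃ u, SBisim T1 T1 s1' u ∧ R u s2'))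

/-- the ≈Δ-equivalence class of a state -/
def eqClassD {A : Type u} (T : LTS.{u, v} A) (s : T.S) : Set T.S := {t | SBisimD T T s t}

/-- the branching degree of a state up to ≈Δ :
the cardinality of `{ (a, [s']_{≈Δ}) | ∃ s''. s →* s'' →a s', s ≈Δ s'', (a = τ ⇒ s'' ≉Δ s') }`. -/
def degD {A : Type u} (T : LTS.{u, v} A) (s : T.S) : Cardinal :=
  Cardinal.mk {p : Option A × Set T.S //
    ∃ s'' s', T.TauStar s s'' ∧ T.step s'' p.1 s' ∧ SBisimD T T s s'' ∧
      (p.1 = none → ¬ SBisimD T T s'' s') ∧ p.2 = eqClassD T s'}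

/-- `T` has a divergence up to ≈Δ : an infinite τ-sequence of reachable,
mutually ≈Δ-equivalent states. -/
def HasDivergenceD {A : Type u} (T : LTS.{u, v} A) : Prop :=
  ∃ f : ℕ → T.S, (∀ i, T.Reachable (f i)) ∧ (∀ i, T.TauStep (f i) (f (i + 1))) ∧
    ∀ i j, SBisimD T T (f i) (f j)

/-- `T` is boundedly branching up to ≈Δ (over the reachable states). -/
def BoundedBranchingUpToD {A : Type u} (T : LTS.{u, v} A) : Prop :=
  ∃ B : ℕ, ∀ s, T.Reachable s → degD T s ≤ (B : Cardinal)

/-! ### (Generalized) reactive Turing machines.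
Tape symbols are `Option D` with `none` the blank `□`; actions are `Option A` with
`none` the unobservable action τ.  A configuration `(s, (l, d, r))` consists of the
control state `s`, the (reversed) tape content `l` to the left of the head, the symbol
`d` under the head, and the tape content `r` to the right of the head; this represents
the tape instance δL ď δR with δL = reverse of l and δR = r.  The boolean in a rule
is the move direction: `false` = L, `true` = R. -/

/-- generalized reactive Turing machines: possibly infinitely many control states,
tape symbols and transition rules. -/
structure GRTM (A : Type u) where
  /-- control states -/
  Q : Type
  /-- data symbols (the tape alphabet is `Option D`, `none` being the blank □) -/
  D : Type
  /-- transition rules `(s, d, a, e, mv, t)`, i.e. s →a[d/e]mv t -/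
  rules : Set (Q × Option D × Option A × Option D × Bool × Q)
  /-- the initial control state -/
  init : Q

namespace GRTM

variable {A : Type u}

/-- configurations -/
abbrev Conf (M : GRTM A) : Type :=
  M.Q × List (Option M.D) × Option M.D × List (Option M.D)

/-- the transition system `T(M)` associated with `M` -/
def lts (M : GRTM A) : LTS.{u, 0} A where
  S := M.Conf
  init := (M.init, [], none, [])
  step := fun c a c' => ∃ e t,
    ((c.1, c.2.2.1, a, e, false, t) ∈ M.rules ∧
      c' = (t, c.2.1.tail, c.2.1.headD none, e :: c.2.2.2)) ∨
    ((c.1, c.2.2.1, a, e, true, t) ∈ M.rules ∧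
      c' = (t, e :: c.2.1, c.2.2.2.headD none, c.2.2.2.tail))

end GRTM

/-- reactive Turing machines: finitely many control states, data symbols and rules. -/
structure RTM (A : Type u) where
  /-- control states -/
  Q : Type
  /-- data symbols -/
  D : Type
  finQ : Finite Q
  finD : Finite D
  /-- transition rules `(s, d, a, e, mv, t)`, i.e. s →a[d/e]mv t -/
  rules : Set (Q × Option D × Option A × Option D × Bool × Q)
  finRules : rules.Finite
  /-- the initial control state -/
  init : Q

namespace RTM

variable {A : Type u}

/-- configurations -/
abbrev Conf (M : RTM A) : Type :=
  M.Q × List (Option M.D) × Option M.D × List (Option M.D)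

/-- the transition system `T(M)` associated with `M` -/
def lts (M : RTM A) : LTS.{u, 0} A where
  S := M.Conf
  init := (M.init, [], none, [])
  step := fun c a c' => ∃ e t,
    ((c.1, c.2.2.1, a, e, false, t) ∈ M.rules ∧
      c' = (t, c.2.1.tail, c.2.1.headD none, e :: c.2.2.2)) ∨
    ((c.1, c.2.2.1, a, e, true, t) ∈ M.rules ∧
      c' = (t, e :: c.2.1, c.2.2.2.headD none, c.2.2.2.tail))

end RTM

/-! ### Auxiliary development for the equivalence theorem -/

namespace BBDAux

open Relation

universe u' v' w' x'

variable {A : Type u'}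

/-- half of the divergence-preservation condition, from `T1` to `T2` -/
def DivHalf (T1 : LTS.{u', v'} A) (T2 : LTS.{u', w'} A) (R : T1.S → T2.S → Prop) : Prop :=
  ∀ (f : ℕ → T1.S) (s2 : T2.S),
      (∀ i, T1.TauStep (f i) (f (i + 1))) → (∀ i, R (f i) s2) →
      ∃ s2', T2.TauPlus s2 s2' ∧ ∃ i, R (f i) s2'

/-- relational composition -/
def Comp {T1 : LTS.{u', v'} A} {T2 : LTS.{u', w'} A} {T3 : LTS.{u', x'} A}
    (R1 : T1.S → T2.S → Prop) (R2 : T2.S → T3.S → Prop) : T1.S → T3.S → Prop :=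
  fun a c => ∃ b, R1 a b ∧ R2 b c

section Flip

variable {T1 : LTS.{u', v'} A} {T2 : LTS.{u', w'} A} {R : T1.S → T2.S → Prop}

theorem isBranchingBisim_flip (h : IsBranchingBisim T1 T2 R) :
    IsBranchingBisim T2 T1 (fun b a => R a b) := fun s2 s1 hr =>
  ⟨fun a s2' hs => (h s1 s2 hr).2 a s2' hs, fun a s1' hs => (h s1 s2 hr).1 a s1' hs⟩

theorem isDivPres_flip (h : IsDivPres T1 T2 R) :
    IsDivPres T2 T1 (fun b a => R a b) :=
  ⟨fun f s1 hf hrel => h.2 s1 f hf hrel, fun s2 g hg hrel => h.1 g s2 hg hrel⟩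

theorem divHalf_flip (h : IsDivPres T1 T2 R) : DivHalf T2 T1 (fun b a => R a b) :=
  fun f s1 hf hrel => h.2 s1 f hf hrel

end Flip

section Basic

variable {T : LTS.{u', v'} A}

theorem optStep_tauStar {s t : T.S} (h : T.OptStep s none t) : T.TauStar s t := by
  rcases h with h | ⟨_, rfl⟩
  · exact ReflTransGen.single h
  · exact ReflTransGen.refl

theorem star_opt_plus {s u u' : T.S} (h1 : T.TauStar s u) (h2 : T.OptStep u none u') :
    T.TauPlus s u' ∨ s = u' := by
  rcases h2 with h2 | ⟨_, rfl⟩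
  · exact Or.inl (TransGen.tail' h1 h2)
  · rcases reflTransGen_iff_eq_or_transGen.mp h1 with rfl | h
    · exact Or.inr rfl
    · exact Or.inl h

/-- states along a run are `TauStar`-reachable from earlier ones -/
theorem run_tauStar {H : ℕ → T.S} (hH : ∀ m, T.TauStep (H m) (H (m + 1))) (m : ℕ) :
    ∀ d, T.TauStar (H m) (H (m + d)) := by
  intro d
  induction d with
  | zero => exact ReflTransGen.refl
  | succ d ih => exact ih.tail (hH (m + d))

/-- a `TransGen` gives a finite path -/
theorem transGen_path {α : Type*} {r : α → α → Prop} {a b : α} (h : TransGen r a b) :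
    ∃ (n : ℕ) (p : ℕ → α), 0 < n ∧ p 0 = a ∧ p n = b ∧ ∀ m < n, r (p m) (p (m + 1)) := by
  induction h with
  | @single c hab =>
    refine ⟨1, fun m => if m = 0 then a else c, Nat.one_pos, by simp, by simp, ?_⟩
    intro m hm
    interval_cases m
    simp [hab]
  | @tail b c hab hbc ih =>
    obtain ⟨n, p, hn, h0, hb, hs⟩ := ih
    refine ⟨n + 1, fun m => if m ≤ n then p m else c, Nat.succ_pos n, by simp [h0], by simp, ?_⟩
    intro m hm
    rcases Nat.lt_or_ge m n with hlt | hge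
    · simp only [Nat.le_of_lt hlt, Nat.succ_le_of_lt hlt, if_pos]
      exact hs m hlt
    · have hmn : m = n := Nat.le_antisymm (Nat.lt_succ_iff.mp hm) hge
      subst hmn
      simp only [le_refl, if_pos, Nat.not_succ_le_self, if_neg, not_false_iff]
      rw [hb]; exact hbc

/-- flatten an infinite chain of `TauPlus` segments into a genuine τ-run with
cofinal checkpoints -/
theorem flatten {g : ℕ → T.S} (hg : ∀ k, T.TauPlus (g k) (g (k + 1))) :
    ∃ H : ℕ → T.S, H 0 = g 0 ∧ (∀ m, T.TauStep (H m) (H (m + 1))) ∧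
      ∀ m, ∃ M k, m ≤ M ∧ H M = g k := by
  classical
  choose n p hn h0 hb hs using fun k => transGen_path (hg k)
  -- positions: (segment index, offset within segment)
  let F : ℕ → ℕ × ℕ := fun m => Nat.rec (0, 0)
    (fun _ q => if q.2 + 1 < n q.1 then (q.1, q.2 + 1) else (q.1 + 1, 0)) m
  have hF0 : F 0 = (0, 0) := rfl
  have hFsucc : ∀ m, F (m + 1) =
      if (F m).2 + 1 < n (F m).1 then ((F m).1, (F m).2 + 1) else ((F m).1 + 1, 0) := fun m => rfl
  have hinv : ∀ m, (F m).2 < n (F m).1 := by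
    intro m
    induction m with
    | zero => simpa [hF0] using hn 0
    | succ m ih =>
      rw [hFsucc m]
      split
      · next h => simpa using h
      · simpa using hn ((F m).1 + 1)
  let H : ℕ → T.S := fun m => p (F m).1 (F m).2
  have hH0 : H 0 = g 0 := by simpa [H, hF0] using h0 0
  have hHstep : ∀ m, T.TauStep (H m) (H (m + 1)) := by
    intro m
    have hi := hinv m
    rw [show H (m+1) = p (F (m+1)).1 (F (m+1)).2 from rfl, hFsucc m]
    split
    · next h => exact hs (F m).1 (F m).2 hi
    · next h =>
      have he : (F m).2 + 1 = n (F m).1 := Nat.le_antisymm hi (Nat.le_of_not_lt h)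
      have : p ((F m).1 + 1) 0 = p (F m).1 ((F m).2 + 1) := by
        rw [h0 ((F m).1 + 1), he, hb (F m).1]
      simpa [this] using hs (F m).1 (F m).2 hi
  refine ⟨H, hH0, hHstep, ?_⟩
  -- cofinality of checkpoints
  have key : ∀ t m, n (F m).1 - (F m).2 ≤ t → ∃ d, 1 ≤ d ∧ (F (m + d)).2 = 0 := by
    intro t
    induction t with
    | zero => intro m hm; exact absurd hm (by have := hinv m; omega)
    | succ t ih =>
      intro m hm
      by_cases h : (F m).2 + 1 < n (F m).1
      · have h1 : F (m + 1) = ((F m).1, (F m).2 + 1) := by rw [hFsucc m, if_pos h]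
        have h2 : n (F (m + 1)).1 - (F (m + 1)).2 ≤ t := by rw [h1]; simp; omega
        obtain ⟨d, hd1, hd2⟩ := ih (m + 1) h2
        exact ⟨d + 1, by omega, by rwa [show m + (d + 1) = m + 1 + d by omega]⟩
      · refine ⟨1, le_refl 1, ?_⟩
        rw [hFsucc m, if_neg h]
  intro m
  obtain ⟨d, _, hd⟩ := key (n (F m).1 - (F m).2) m le_rfl
  refine ⟨m + d, (F (m + d)).1, Nat.le_add_right m d, ?_⟩
  show p (F (m + d)).1 (F (m + d)).2 = g (F (m + d)).1
  rw [hd, h0]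

end Basic

section Transfer

variable {T1 : LTS.{u', v'} A} {T2 : LTS.{u', w'} A} {R : T1.S → T2.S → Prop}

/-- transfer of a τ-path along a branching bisimulation -/
theorem star_transfer (hBB : IsBranchingBisim T1 T2 R) {s1 s1' : T1.S}
    (h : T1.TauStar s1 s1') {s2 : T2.S} (hr : R s1 s2) :
    ∃ s2', T2.TauStar s2 s2' ∧ R s1' s2' := by
  induction h with
  | refl => exact ⟨s2, ReflTransGen.refl, hr⟩
  | @tail b c _ hbc ih =>
    obtain ⟨u, hu, hub⟩ := ih
    obtain ⟨v, v', hv, hopt, _, hv'⟩ := (hBB _ _ hub).1 none c hbc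
    exact ⟨v', hu.trans (hv.trans (optStep_tauStar hopt)), hv'⟩

/-- Key lemma: if the head of an infinite τ-run is related to `s2`, then `s2` can
take at least one τ-step and stay related to some state on the run. -/
theorem lemmaA (hBB : IsBranchingBisim T1 T2 R) (hD : DivHalf T1 T2 R)
    (f : ℕ → T1.S) (hf : ∀ i, T1.TauStep (f i) (f (i + 1))) (s2 : T2.S)
    (h0 : R (f 0) s2) :
    ∃ s2', T2.TauPlus s2 s2' ∧ ∃ i, R (f i) s2' := by
  classical
  by_cases hall : ∀ i, R (f i) s2
  · exact hD f s2 hf hall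
  · push_neg at hall
    have hex : ∃ i, ¬ R (f i) s2 := hall
    have hj : ¬ R (f (Nat.find hex)) s2 := Nat.find_spec hex
    have hjpos : 0 < Nat.find hex := by
      rcases Nat.eq_zero_or_pos (Nat.find hex) with h | h
      · exact absurd (h ▸ h0) (h ▸ hj)
      · exact h
    obtain ⟨m, hm⟩ : ∃ m, Nat.find hex = m + 1 :=
      ⟨Nat.find hex - 1, (Nat.succ_pred_eq_of_pos hjpos).symm⟩
    have hmr : R (f m) s2 := by
      by_contra hc
      exact absurd hc (not_not.mpr (by_contra fun h => Nat.find_min hex (by omega) hc))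
    obtain ⟨u, u', hstar, hopt, _, hu'⟩ := (hBB _ _ hmr).1 none (f (m + 1)) (hf m)
    rcases star_opt_plus hstar hopt with hplus | rfl
    · exact ⟨u', hplus, m + 1, hu'⟩
    · exact absurd hu' (hm ▸ hj)

/-- iterate `lemmaA` to get an infinite chain of `TauPlus`-connected checkpoints,
each related to some state of the run -/
theorem chain_exists (hBB : IsBranchingBisim T1 T2 R) (hD : DivHalf T1 T2 R)
    (f : ℕ → T1.S) (hf : ∀ i, T1.TauStep (f i) (f (i + 1))) {g0 : T2.S}
    (h0 : R (f 0) g0) :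
    ∃ (g : ℕ → T2.S) (idx : ℕ → ℕ), g 0 = g0 ∧
      (∀ k, T2.TauPlus (g k) (g (k + 1))) ∧ ∀ k, R (f (idx k)) (g k) := by
  classical
  have next : ∀ x : {q : ℕ × T2.S // R (f q.1) q.2},
      ∃ y : {q : ℕ × T2.S // R (f q.1) q.2}, T2.TauPlus x.1.2 y.1.2 := by
    rintro ⟨⟨i, u⟩, hu⟩
    have hf' : ∀ m, T1.TauStep (f (i + m)) (f (i + m + 1)) := fun m => hf (i + m)
    obtain ⟨u', hplus, j, hj⟩ := lemmaA hBB hD (fun m => f (i + m))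
      (fun m => by simpa [Nat.add_assoc] using hf' m) u hu
    exact ⟨⟨(i + j, u'), hj⟩, hplus⟩
  choose nxt hnxt using next
  let seq : ℕ → {q : ℕ × T2.S // R (f q.1) q.2} := fun k =>
    Nat.rec ⟨(0, g0), h0⟩ (fun _ x => nxt x) k
  exact ⟨fun k => (seq k).1.2, fun k => (seq k).1.1, rfl,
    fun k => hnxt (seq k), fun k => (seq k).2⟩

end Transfer

section Compo

variable {T1 : LTS.{u', v'} A} {T2 : LTS.{u', w'} A} {T3 : LTS.{u', x'} A}
  {R1 : T1.S → T2.S → Prop} {R2 : T2.S → T3.S → Prop}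

theorem comp_forward (hBB1 : IsBranchingBisim T1 T2 R1) (hBB2 : IsBranchingBisim T2 T3 R2)
    {s1 : T1.S} {s2 : T2.S} {s3 : T3.S} (h1 : R1 s1 s2) (h2 : R2 s2 s3)
    {a : Option A} {s1' : T1.S} (hs : T1.step s1 a s1') :
    ∃ s3'' s3', T3.TauStar s3 s3'' ∧ T3.OptStep s3'' a s3' ∧
      Comp R1 R2 s1 s3'' ∧ Comp R1 R2 s1' s3' := by
  obtain ⟨s2'', s2', hstar, hopt, hr1, hr1'⟩ := (hBB1 _ _ h1).1 a s1' hs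
  obtain ⟨v, hvstar, hv⟩ := star_transfer hBB2 hstar h2
  rcases hopt with hstep | ⟨rfl, heq⟩
  · obtain ⟨v'', v', hst2, hopt2, hq, hq'⟩ := (hBB2 _ _ hv).1 a s2' hstep
    exact ⟨v'', v', hvstar.trans hst2, hopt2, ⟨s2'', hr1, hq⟩, ⟨s2', hr1', hq'⟩⟩
  · subst heq
    exact ⟨v, v, hvstar, Or.inr ⟨rfl, rfl⟩, ⟨s2'', hr1, hv⟩, ⟨s2'', hr1', hv⟩⟩

theorem isBranchingBisim_comp (hBB1 : IsBranchingBisim T1 T2 R1)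
    (hBB2 : IsBranchingBisim T2 T3 R2) :
    IsBranchingBisim T1 T3 (Comp R1 R2) := by
  rintro s1 s3 ⟨s2, h1, h2⟩
  constructor
  · intro a s1' hs
    exact comp_forward hBB1 hBB2 h1 h2 hs
  · intro a s3' hs
    obtain ⟨u'', u', hstar, hopt, ⟨b, hb1, hb2⟩, ⟨b', hb1', hb2'⟩⟩ :=
      comp_forward (isBranchingBisim_flip hBB2) (isBranchingBisim_flip hBB1) h2 h1 hs
    exact ⟨u'', u', hstar, hopt, ⟨b, hb2, hb1⟩, ⟨b', hb2', hb1'⟩⟩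

theorem comp_divhalf (hBB1 : IsBranchingBisim T1 T2 R1) (hBB2 : IsBranchingBisim T2 T3 R2)
    (hD1 : DivHalf T1 T2 R1) (hD2 : DivHalf T2 T3 R2) :
    DivHalf T1 T3 (Comp R1 R2) := by
  intro f s3 hf hrel
  obtain ⟨g0, hg01, hg02⟩ := hrel 0
  obtain ⟨g, idx, hg0, hgplus, hgrel⟩ := chain_exists hBB1 hD1 f hf hg01
  obtain ⟨H, hH0, hHstep, hHcof⟩ := flatten hgplus
  have hH0rel : R2 (H 0) s3 := by rw [hH0, hg0]; exact hg02
  obtain ⟨s3', hplus, m, hm⟩ := lemmaA hBB2 hD2 H hHstep s3 hH0rel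
  obtain ⟨M, k, hmM, hMk⟩ := hHcof m
  have hstar : T2.TauStar (H m) (H M) := by
    have := run_tauStar hHstep m (M - m)
    rwa [Nat.add_sub_cancel' hmM] at this
  obtain ⟨v, hvstar, hv⟩ := star_transfer hBB2 hstar hm
  rw [hMk] at hv
  exact ⟨v, hplus.trans_left hvstar, idx k, g k, hgrel k, hv⟩

theorem isDivPres_comp (hBB1 : IsBranchingBisim T1 T2 R1) (hBB2 : IsBranchingBisim T2 T3 R2)
    (hD1 : IsDivPres T1 T2 R1) (hD2 : IsDivPres T2 T3 R2) :
    IsDivPres T1 T3 (Comp R1 R2) := by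
  constructor
  · exact comp_divhalf hBB1 hBB2 hD1.1 hD2.1
  · intro s1 g hg hrel
    have h := comp_divhalf (isBranchingBisim_flip hBB2) (isBranchingBisim_flip hBB1)
      (divHalf_flip hD2) (divHalf_flip hD1) g s1 hg
      (fun i => by obtain ⟨b, hb1, hb2⟩ := hrel i; exact ⟨b, hb2, hb1⟩)
    obtain ⟨s1', hplus, i, b, hb1, hb2⟩ := h
    exact ⟨s1', hplus, i, b, hb2, hb1⟩

end Compo

section Refl

variable {T : LTS.{u', v'} A}

theorem isBranchingBisim_eq : IsBranchingBisim T T (· = ·) := by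
  intro s1 s2 h
  subst h
  exact ⟨fun a s1' hs => ⟨s1, s1', ReflTransGen.refl, Or.inl hs, rfl, rfl⟩,
    fun a s2' hs => ⟨s1, s2', ReflTransGen.refl, Or.inl hs, rfl, rfl⟩⟩

theorem isDivPres_eq : IsDivPres T T (· = ·) := by
  constructor
  · intro f s2 hf hrel
    exact ⟨f 1, TransGen.single ((hrel 0) ▸ hf 0), 1, rfl⟩
  · intro s1 g hg hrel
    exact ⟨g 1, TransGen.single ((hrel 0) ▸ hg 0), 1, rfl⟩

end Refl

end BBDAux

/-! ### STATEMENT 1: divergence-preserving branching bisimilarity is an equivalence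
relation -/

theorem branchingBisimilarD_equivalence :
    (∀ (A : Type u) (T1 : LTS.{u, v} A), BranchingBisimilarD T1 T1) ∧
    (∀ (A : Type u) (T1 : LTS.{u, v} A) (T2 : LTS.{u, w} A),
        BranchingBisimilarD T1 T2 → BranchingBisimilarD T2 T1) ∧
    (∀ (A : Type u) (T1 : LTS.{u, v} A) (T2 : LTS.{u, w} A) (T3 : LTS.{u, x} A),
        BranchingBisimilarD T1 T2 → BranchingBisimilarD T2 T3 → BranchingBisimilarD T1 T3) ∧
    (∀ (A : Type u) (T1 : LTS.{u, v} A) (s : T1.S), SBisimD T1 T1 s s) ∧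
    (∀ (A : Type u) (T1 : LTS.{u, v} A) (T2 : LTS.{u, w} A) (s1 : T1.S) (s2 : T2.S),
        SBisimD T1 T2 s1 s2 → SBisimD T2 T1 s2 s1) ∧
    (∀ (A : Type u) (T1 : LTS.{u, v} A) (T2 : LTS.{u, w} A) (T3 : LTS.{u, x} A)
        (s1 : T1.S) (s2 : T2.S) (s3 : T3.S),
        SBisimD T1 T2 s1 s2 → SBisimD T2 T3 s2 s3 → SBisimD T1 T3 s1 s3) := by
  refine ⟨?_, ?_, ?_, ?_, ?_, ?_⟩
  · intro A T1
    exact ⟨(· = ·), BBDAux.isBranchingBisim_eq, BBDAux.isDivPres_eq, rfl⟩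
  · rintro A T1 T2 ⟨R, hBB, hD, hinit⟩
    exact ⟨fun b a => R a b, BBDAux.isBranchingBisim_flip hBB, BBDAux.isDivPres_flip hD, hinit⟩
  · rintro A T1 T2 T3 ⟨R1, hBB1, hD1, h1⟩ ⟨R2, hBB2, hD2, h2⟩
    exact ⟨BBDAux.Comp R1 R2, BBDAux.isBranchingBisim_comp hBB1 hBB2,
      BBDAux.isDivPres_comp hBB1 hBB2 hD1 hD2, ⟨T2.init, h1, h2⟩⟩
  · intro A T1 s
    exact ⟨(· = ·), BBDAux.isBranchingBisim_eq, BBDAux.isDivPres_eq, rfl⟩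
  · rintro A T1 T2 s1 s2 ⟨R, hBB, hD, h⟩
    exact ⟨fun b a => R a b, BBDAux.isBranchingBisim_flip hBB, BBDAux.isDivPres_flip hD, h⟩
  · rintro A T1 T2 T3 s1 s2 s3 ⟨R1, hBB1, hD1, h1⟩ ⟨R2, hBB2, hD2, h2⟩
    exact ⟨BBDAux.Comp R1 R2, BBDAux.isBranchingBisim_comp hBB1 hBB2,
      BBDAux.isDivPres_comp hBB1 hBB2 hD1 hD2, ⟨s2, h1, h2⟩⟩
end

section
/- If R is a bisimulation up to ≈b from T1 to T2, then R ⊆ ≈b, i.e., every pair of states related by R is branching bisimilar. -/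
set_option autoImplicit false

universe u v w x

section Aux

variable {A : Type u}

lemma sbisim_refl (T : LTS.{u, v} A) (s : T.S) : SBisim T T s s := by
  refine ⟨Eq, fun t1 t2 h => ?_, rfl⟩
  subst h
  exact ⟨fun a s' hs => ⟨t1, s', .refl, .inl hs, rfl, rfl⟩,
         fun a s' hs => ⟨t1, s', .refl, .inl hs, rfl, rfl⟩⟩

lemma isBisim_flip {T1 : LTS.{u, v} A} {T2 : LTS.{u, w} A} {R : T1.S → T2.S → Prop}
    (h : IsBranchingBisim T1 T2 R) :
    IsBranchingBisim T2 T1 (fun s2 s1 => R s1 s2) := by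
  intro s2 s1 hr
  obtain ⟨h1, h2⟩ := h s1 s2 hr
  constructor
  · intro a s2' hs
    obtain ⟨s1'', s1', ht, ho, hc1, hc2⟩ := h2 a s2' hs
    exact ⟨s1'', s1', ht, ho, hc1, hc2⟩
  · intro a s1' hs
    obtain ⟨s2'', s2', ht, ho, hc1, hc2⟩ := h1 a s1' hs
    exact ⟨s2'', s2', ht, ho, hc1, hc2⟩

lemma sbisim_symm {T1 : LTS.{u, v} A} {T2 : LTS.{u, w} A} {s1 : T1.S} {s2 : T2.S}
    (h : SBisim T1 T2 s1 s2) : SBisim T2 T1 s2 s1 := by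
  obtain ⟨R, hb, hr⟩ := h
  exact ⟨fun a b => R b a, isBisim_flip hb, hr⟩

/-- response to a sequence of τ-steps -/
lemma bisim_tauStar {T1 : LTS.{u, v} A} {T2 : LTS.{u, w} A} {R : T1.S → T2.S → Prop}
    (h : IsBranchingBisim T1 T2 R) {s1 s1' : T1.S} (ht : T1.TauStar s1 s1') :
    ∀ s2 : T2.S, R s1 s2 → ∃ s2', T2.TauStar s2 s2' ∧ R s1' s2' := by
  induction ht with
  | refl => exact fun s2 hr => ⟨s2, .refl, hr⟩
  | tail _ hstep ih =>
    rename_i b c _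
    intro s2 hr
    obtain ⟨s2', ht2, hr'⟩ := ih s2 hr
    obtain ⟨u'', u', htu, hou, _, hc2⟩ := (h b s2' hr').1 none c hstep
    rcases hou with hstep2 | ⟨_, heq⟩
    · exact ⟨u', ht2.trans (htu.tail hstep2), hc2⟩
    · exact ⟨u'', ht2.trans htu, heq ▸ hc2⟩

lemma isBisim_comp {T1 : LTS.{u, v} A} {T2 : LTS.{u, w} A} {T3 : LTS.{u, x} A}
    {R1 : T1.S → T2.S → Prop} {R2 : T2.S → T3.S → Prop}
    (h1 : IsBranchingBisim T1 T2 R1) (h2 : IsBranchingBisim T2 T3 R2) :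
    IsBranchingBisim T1 T3 (fun a c => ∃ b, R1 a b ∧ R2 b c) := by
  have h1' := isBisim_flip h1
  have h2' := isBisim_flip h2
  intro s1 s3 ⟨s2, hr1, hr2⟩
  constructor
  · intro a s1' hs
    obtain ⟨u'', u', htu, hou, hc1, hc2⟩ := (h1 s1 s2 hr1).1 a s1' hs
    obtain ⟨v, htv, hrv⟩ := bisim_tauStar h2 htu s3 hr2
    rcases hou with hstep | ⟨ha, heq⟩
    · obtain ⟨w'', w', htw, how, hd1, hd2⟩ := (h2 u'' v hrv).1 a u' hstep
      exact ⟨w'', w', htv.trans htw, how, ⟨u'', hc1, hd1⟩, ⟨u', hc2, hd2⟩⟩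
    · subst heq
      exact ⟨v, v, htv, .inr ⟨ha, rfl⟩, ⟨u'', hc1, hrv⟩, ⟨u'', hc2, hrv⟩⟩
  · intro a s3' hs
    obtain ⟨u'', u', htu, hou, hc1, hc2⟩ := (h2 s2 s3 hr2).2 a s3' hs
    obtain ⟨v, htv, hrv⟩ := bisim_tauStar h1' htu s1 hr1
    rcases hou with hstep | ⟨ha, heq⟩
    · obtain ⟨w'', w', htw, how, hd1, hd2⟩ := (h1' u'' v hrv).1 a u' hstep
      exact ⟨w'', w', htv.trans htw, how, ⟨u'', hd1, hc1⟩, ⟨u', hd2, hc2⟩⟩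
    · subst heq
      exact ⟨v, v, htv, .inr ⟨ha, rfl⟩, ⟨u'', hrv, hc1⟩, ⟨u'', hrv, hc2⟩⟩

lemma sbisim_trans {T1 : LTS.{u, v} A} {T2 : LTS.{u, w} A} {T3 : LTS.{u, x} A}
    {s1 : T1.S} {s2 : T2.S} {s3 : T3.S}
    (h : SBisim T1 T2 s1 s2) (h' : SBisim T2 T3 s2 s3) : SBisim T1 T3 s1 s3 := by
  obtain ⟨R1, hb1, hr1⟩ := h
  obtain ⟨R2, hb2, hr2⟩ := h'
  exact ⟨_, isBisim_comp hb1 hb2, s2, hr1, hr2⟩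

/-- τ-star response at the level of `SBisim` -/
lemma sbisim_tauStar {T1 : LTS.{u, v} A} {T2 : LTS.{u, w} A} {s1 s1' : T1.S} {s2 : T2.S}
    (h : SBisim T1 T2 s1 s2) (ht : T1.TauStar s1 s1') :
    ∃ s2', T2.TauStar s2 s2' ∧ SBisim T1 T2 s1' s2' := by
  obtain ⟨R, hb, hr⟩ := h
  obtain ⟨s2', ht2, hr'⟩ := bisim_tauStar hb ht s2 hr
  exact ⟨s2', ht2, R, hb, hr'⟩

end Aux

/-! ### STATEMENT 2: a bisimulation up to ≈b is included in ≈b -/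

theorem bisimUpTo_subset_sBisim {A : Type u} (T1 : LTS.{u, v} A) (T2 : LTS.{u, w} A)
    (R : T1.S → T2.S → Prop) (hR : IsBisimUpTo T1 T2 R) :
    ∀ s1 s2, R s1 s2 → SBisim T1 T2 s1 s2 := by
  classical
  intro s1 s2 hr
  refine ⟨fun t1 t2 => ∃ u, SBisim T1 T1 t1 u ∧ R u t2, ?_, s1, sbisim_refl T1 s1, hr⟩
  clear hr s1 s2
  intro t1 t2 ⟨u, hbu, hru⟩
  constructor
  · -- challenge from the left
    intro a t1' hstep
    obtain ⟨Rb, hRb, hrb⟩ := hbu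
    obtain ⟨u'', u', htu, hou, hc1, hc2⟩ := (hRb t1 u hrb).1 a t1' hstep
    have hbu'' : SBisim T1 T1 t1 u'' := ⟨Rb, hRb, hc1⟩
    have hbu' : SBisim T1 T1 t1' u' := ⟨Rb, hRb, hc2⟩
    rcases hou with hstep2 | ⟨ha, heq⟩
    · -- u'' does an actual a-step to u'
      by_cases htriv : a = none ∧ SBisim T1 T1 u'' u'
      · -- trivial τ-step, t2 stays put
        obtain ⟨ha, hbe⟩ := htriv
        refine ⟨t2, t2, .refl, .inr ⟨ha, rfl⟩, ⟨u, ⟨Rb, hRb, hrb⟩, hru⟩, ?_⟩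
        have : SBisim T1 T1 t1' u :=
          sbisim_trans (sbisim_trans hbu' (sbisim_symm hbe))
            (sbisim_trans (sbisim_symm hbu'') ⟨Rb, hRb, hrb⟩)
        exact ⟨u, this, hru⟩
      · have hside : a ≠ none ∨ ¬ SBisim T1 T1 u'' u' := by
          by_cases ha : a = none
          · exact Or.inr fun hb => htriv ⟨ha, hb⟩
          · exact Or.inl ha
        have huu'' : SBisim T1 T1 u u'' := sbisim_trans (sbisim_symm ⟨Rb, hRb, hrb⟩) hbu''
        obtain ⟨s2', hs2', ⟨v, hv1, hv2⟩, ⟨w, hw1, hw2⟩⟩ :=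
          (hR u t2 hru).1 a u'' u' htu hstep2 huu'' hside
        refine ⟨t2, s2', .refl, .inl hs2', ⟨u, ⟨Rb, hRb, hrb⟩, hru⟩, ?_⟩
        exact ⟨w, sbisim_trans hbu' hw1, hw2⟩
    · -- stuttering case: a = τ and u'' = u'
      subst heq
      refine ⟨t2, t2, .refl, .inr ⟨ha, rfl⟩, ⟨u, ⟨Rb, hRb, hrb⟩, hru⟩, ?_⟩
      have : SBisim T1 T1 t1' u :=
        sbisim_trans hbu' (sbisim_trans (sbisim_symm hbu'') ⟨Rb, hRb, hrb⟩)
      exact ⟨u, this, hru⟩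
  · -- challenge from the right
    intro a t2' hstep
    obtain ⟨u'', u', htu, hstep1, hbu''u, v, hv1, hv2⟩ := (hR u t2 hru).2 a t2' hstep
    -- t1 ≈b u and u ⇒* u'' ; find a matching τ-path from t1
    obtain ⟨t1a, hta, hta_b⟩ := sbisim_tauStar (sbisim_symm hbu) htu
    -- now u'' →a u' ; t1a ≈b u'' responds
    obtain ⟨Rc, hRc, hrc⟩ := hta_b
    obtain ⟨w'', w', htw, how, hd1, hd2⟩ := (hRc u'' t1a hrc).1 a u' hstep1
    refine ⟨w'', w', hta.trans htw, how, ?_, ?_⟩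
    · -- w'' is related to t2 : w'' ≈b u'' ≈b u, R u t2
      have : SBisim T1 T1 w'' u := sbisim_trans (sbisim_symm ⟨Rc, hRc, hd1⟩) hbu''u
      exact ⟨u, this, hru⟩
    · -- w' is related to t2' : w' ≈b u' ≈b v, R v t2'
      have : SBisim T1 T1 w' v := sbisim_trans (sbisim_symm ⟨Rc, hRc, hd2⟩) hv1
      exact ⟨v, this, hv2⟩
end

section
/- If s ≈Δ t, then deg_{≈Δ}(s) = deg_{≈Δ}(t), i.e., divergence-preserving branching bisimilar states have the same branching degree up to ≈Δ. -/
set_option autoImplicit false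

universe u v w x

/-! ### STATEMENT 4: ≈Δ-equivalent states have the same branching degree up to ≈Δ -/

/-! ### Auxiliary development for STATEMENT 4 -/

section DegDAux

variable {A : Type u} {T : LTS.{u, v} A} {R R1 R2 : T.S → T.S → Prop}

lemma optStep_tauStar {s t : T.S} (h : T.OptStep s none t) : T.TauStar s t := by
  rcases h with h | ⟨_, rfl⟩
  · exact Relation.ReflTransGen.single h
  · exact Relation.ReflTransGen.refl

lemma tauStar_cases {s t : T.S} (h : T.TauStar s t) : s = t ∨ T.TauPlus s t := by
  rcases Relation.reflTransGen_iff_eq_or_transGen.mp h with h | h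
  · exact Or.inl h.symm
  · exact Or.inr h

lemma bisim_flip (h : IsBranchingBisim T T R) :
    IsBranchingBisim T T (fun a b => R b a) :=
  fun s1 s2 hR => ⟨(h s2 s1 hR).2, (h s2 s1 hR).1⟩

lemma divpres_flip (h : IsDivPres T T R) :
    IsDivPres T T (fun a b => R b a) :=
  ⟨fun f s2 hf hR => h.2 s2 f hf hR, fun s1 g hg hR => h.1 g s1 hg hR⟩

lemma tauStar_transfer (hb : IsBranchingBisim T T R) {s s' t : T.S} (hR : R s t)
    (h : T.TauStar s s') : ∃ t', T.TauStar t t' ∧ R s' t' := by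
  induction h with
  | refl => exact ⟨t, Relation.ReflTransGen.refl, hR⟩
  | tail _ hstep ih =>
    obtain ⟨t1, ht1, hR1⟩ := ih
    obtain ⟨x, x', hx, hxx', -, hR2⟩ := (hb _ t1 hR1).1 none _ hstep
    exact ⟨x', (ht1.trans hx).trans (optStep_tauStar hxx'), hR2⟩

lemma matched_seq_star (hb : IsBranchingBisim T T R) (W : ℕ → T.S)
    (hW : ∀ i, T.TauStar (W i) (W (i + 1))) {v : T.S} (hv : R (W 0) v) :
    ∃ Y : ℕ → T.S, Y 0 = v ∧ (∀ i, R (W i) (Y i)) ∧ ∀ i, T.TauStar (Y i) (Y (i + 1)) := by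
  have key : ∀ i (y : T.S), R (W i) y → ∃ y', T.TauStar y y' ∧ R (W (i + 1)) y' :=
    fun i y hy => tauStar_transfer hb hy (hW i)
  choose nxt h1 h2 using key
  let g : ∀ i : ℕ, {y : T.S // R (W i) y} :=
    fun i => Nat.rec ⟨v, hv⟩ (fun i p => ⟨nxt i p.1 p.2, h2 i p.1 p.2⟩) i
  exact ⟨fun i => (g i).1, rfl, fun i => (g i).2, fun i => h1 i (g i).1 (g i).2⟩

lemma star_chain {Y : ℕ → T.S} (hY : ∀ i, T.TauStar (Y i) (Y (i + 1)))
    {a b : ℕ} (h : a ≤ b) : T.TauStar (Y a) (Y b) := by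
  induction b, h using Nat.le_induction with
  | base => exact Relation.ReflTransGen.refl
  | succ b hab ih => exact ih.trans (hY b)

/-- finite τ-paths of positive length -/
lemma tauPlus_path {s t : T.S} (h : T.TauPlus s t) :
    ∃ (n : ℕ) (g : ℕ → T.S), 0 < n ∧ g 0 = s ∧ g n = t ∧
      ∀ i, i < n → T.TauStep (g i) (g (i + 1)) := by
  induction h with
  | @single b h =>
    refine ⟨1, fun i => if i = 0 then s else b, one_pos, by simp, by simp, ?_⟩
    intro i hi
    interval_cases i
    simpa using h
  | @tail b c _ hbc ih =>
    obtain ⟨n, g, hn, h0, hnE, hp⟩ := ih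
    refine ⟨n + 1, fun i => if i ≤ n then g i else c, Nat.succ_pos n, by simp [h0], by simp, ?_⟩
    intro i hi
    rcases Nat.lt_or_ge i n with hlt | hge
    · simpa [Nat.le_of_lt hlt, Nat.succ_le_of_lt hlt] using hp i hlt
    · have : i = n := Nat.le_antisymm (Nat.lt_succ_iff.mp hi) hge
      subst this
      simpa [hnE] using hbc

/-- concatenation of infinitely many τ⁺-segments into a single infinite τ-run -/
lemma concat_plus (z : ℕ → T.S) (hz : ∀ k, T.TauPlus (z k) (z (k + 1))) :
    ∃ (G : ℕ → T.S) (φ : ℕ → ℕ), (∀ m, T.TauStep (G m) (G (m + 1))) ∧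
      (∀ k, k ≤ φ k) ∧ φ 0 = 0 ∧ ∀ k, G (φ k) = z k := by
  choose n g hn h0 hE hp using fun k => tauPlus_path (hz k)
  let H : ℕ → ℕ × ℕ := fun m =>
    Nat.rec (0, 0) (fun _ p => if p.2 + 1 < n p.1 then (p.1, p.2 + 1) else (p.1 + 1, 0)) m
  have Hzero : H 0 = (0, 0) := rfl
  have Hsucc : ∀ m, H (m + 1) =
      if (H m).2 + 1 < n (H m).1 then ((H m).1, (H m).2 + 1) else ((H m).1 + 1, 0) := fun m => rfl
  have hinv : ∀ m, (H m).2 < n (H m).1 := by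
    intro m
    induction m with
    | zero => simpa [Hzero] using hn 0
    | succ m ih =>
      rw [Hsucc m]
      split
      · next hlt => simpa using hlt
      · simpa using hn _
  let G : ℕ → T.S := fun m => g (H m).1 (H m).2
  let σ : ℕ → ℕ := fun k => Nat.rec 0 (fun k' s => s + n k') k
  have σsucc : ∀ k, σ (k + 1) = σ k + n k := fun k => rfl
  have Hσadd : ∀ k, H (σ k) = (k, 0) → ∀ r, r < n k → H (σ k + r) = (k, r) := by
    intro k hbase r
    induction r with
    | zero => intro _; simpa using hbase
    | succ r ih =>
      intro hr
      have hr' : r < n k := Nat.lt_of_succ_lt hr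
      have : σ k + (r + 1) = (σ k + r) + 1 := rfl
      rw [this, Hsucc, ih hr']
      simp [hr]
  have Hσ : ∀ k, H (σ k) = (k, 0) := by
    intro k
    induction k with
    | zero => exact Hzero
    | succ k ih =>
      have hn1 : n k - 1 < n k := Nat.sub_lt (hn k) one_pos
      have h1 : H (σ k + (n k - 1)) = (k, n k - 1) := Hσadd k ih _ hn1
      have h2 : σ (k + 1) = (σ k + (n k - 1)) + 1 := by
        rw [σsucc]
        omega
      rw [h2, Hsucc, h1]
      have : ¬ ((n k - 1) + 1 < n k) := by omega
      simp [this]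
  have hGstep : ∀ m, T.TauStep (G m) (G (m + 1)) := by
    intro m
    have hlt := hinv m
    show T.TauStep (g (H m).1 (H m).2) (g (H (m + 1)).1 (H (m + 1)).2)
    rw [Hsucc m]
    by_cases hc : (H m).2 + 1 < n (H m).1
    · simpa [hc] using hp (H m).1 (H m).2 hlt
    · have heq : (H m).2 + 1 = n (H m).1 := by omega
      have hgg : g ((H m).1 + 1) 0 = g (H m).1 ((H m).2 + 1) := by
        rw [h0, heq, hE]
      simp only [hc, if_false]
      simpa [hgg] using hp (H m).1 (H m).2 hlt
  have hσmono : ∀ k, k ≤ σ k := by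
    intro k
    induction k with
    | zero => exact Nat.le_refl 0
    | succ k ih =>
      rw [σsucc]
      have := hn k
      omega
  refine ⟨G, σ, hGstep, hσmono, rfl, ?_⟩
  intro k
  show g (H (σ k)).1 (H (σ k)).2 = z k
  rw [Hσ k]
  exact h0 k

/-- divergence transfer along a τ⁺-linked sequence of related states -/
lemma divpres_plus (hb : IsBranchingBisim T T R)
    (hd : ∀ (f : ℕ → T.S) (s2 : T.S), (∀ i, T.TauStep (f i) (f (i + 1))) →
      (∀ i, R (f i) s2) → ∃ s2', T.TauPlus s2 s2' ∧ ∃ i, R (f i) s2')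
    (z : ℕ → T.S) (v : T.S) (hz : ∀ k, T.TauPlus (z k) (z (k + 1)))
    (hzv : ∀ k, R (z k) v) :
    ∃ v', T.TauPlus v v' ∧ ∃ k, R (z k) v' := by
  obtain ⟨G, φ, hG, hφ, hφ0, hmk⟩ := concat_plus z hz
  have hstar : ∀ i, T.TauStar (G i) (G (i + 1)) := fun i => Relation.ReflTransGen.single (hG i)
  have hG0 : R (G 0) v := by
    have h00 := hmk 0
    rw [hφ0] at h00
    rw [h00]
    exact hzv 0
  obtain ⟨Y, hY0, hYR, hYs⟩ := matched_seq_star hb G hstar hG0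
  by_cases hc : ∀ m, Y (m + 1) = Y m
  · have hYv : ∀ m, Y m = v := by
      intro m
      induction m with
      | zero => exact hY0
      | succ m ih => rw [hc m, ih]
    have hGv : ∀ m, R (G m) v := fun m => hYv m ▸ hYR m
    obtain ⟨v', hv', m, hm⟩ := hd G v hG hGv
    obtain ⟨Y', hY'0, hY'R, hY's⟩ := matched_seq_star hb (fun i => G (m + i))
      (fun i => hstar (m + i)) (v := v') hm
    have hle : m ≤ φ m := hφ m
    have hidx : m + (φ m - m) = φ m := Nat.add_sub_cancel' hle
    refine ⟨Y' (φ m - m), ?_, m, ?_⟩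
    · exact hv'.trans_left (hY'0 ▸ star_chain hY's (Nat.zero_le _))
    · have := hY'R (φ m - m)
      rwa [hidx, hmk m] at this
  · push_neg at hc
    obtain ⟨m, hm⟩ := hc
    have h1 : T.TauStar v (Y m) := hY0 ▸ star_chain hYs (Nat.zero_le m)
    have h2 : T.TauPlus (Y m) (Y (m + 1)) := by
      rcases tauStar_cases (hYs m) with heq | hp
      · exact absurd heq.symm hm
      · exact hp
    have h3 : T.TauStar (Y (m + 1)) (Y (φ (m + 1))) := star_chain hYs (hφ (m + 1))
    refine ⟨Y (φ (m + 1)), (Relation.TransGen.trans_right h1 h2).trans_left h3, m + 1, ?_⟩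
    have := hYR (φ (m + 1))
    rwa [hmk (m + 1)] at this

/-- progress step in the composition divergence argument -/
lemma comp_progress (hb1 : IsBranchingBisim T T R1)
    (hd1 : ∀ (f : ℕ → T.S) (s2 : T.S), (∀ i, T.TauStep (f i) (f (i + 1))) →
      (∀ i, R1 (f i) s2) → ∃ s2', T.TauPlus s2 s2' ∧ ∃ i, R1 (f i) s2')
    (hb2 : IsBranchingBisim T T R2)
    (f : ℕ → T.S) (hf : ∀ i, T.TauStep (f i) (f (i + 1))) (v : T.S)
    (H : ¬ ∃ v', T.TauPlus v v' ∧ ∃ j u', R1 (f j) u' ∧ R2 u' v')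
    {j : ℕ} {u : T.S} (h1 : R1 (f j) u) (h2 : R2 u v) :
    ∃ u' j', T.TauPlus u u' ∧ R1 (f j') u' ∧ R2 u' v := by
  have hfj : ∀ i, T.TauStar (f (j + i)) (f (j + (i + 1))) :=
    fun i => Relation.ReflTransGen.single (hf (j + i))
  obtain ⟨W, hW0, hWR, hWs⟩ := matched_seq_star hb1 (fun i => f (j + i)) hfj (v := u) h1
  obtain ⟨Y, hY0, hYR, hYs⟩ := matched_seq_star hb2 W hWs (v := v) (hW0 ▸ h2)
  by_cases hcY : ∀ i, Y (i + 1) = Y i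
  · have hYv : ∀ i, Y i = v := by
      intro i
      induction i with
      | zero => exact hY0
      | succ i ih => rw [hcY i, ih]
    have hWv : ∀ i, R2 (W i) v := fun i => hYv i ▸ hYR i
    by_cases hcW : ∀ i, W (i + 1) = W i
    · have hWu : ∀ i, W i = u := by
        intro i
        induction i with
        | zero => exact hW0
        | succ i ih => rw [hcW i, ih]
      have hall : ∀ i, R1 (f (j + i)) u := fun i => hWu i ▸ hWR i
      obtain ⟨u1, hu1, m, hm⟩ := hd1 (fun i => f (j + i)) u (fun i => hf (j + i)) hall
      obtain ⟨v1, hv1, hR2v1⟩ := tauStar_transfer hb2 h2 hu1.to_reflTransGen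
      rcases tauStar_cases hv1 with heq | hpl
      · exact ⟨u1, j + m, hu1, hm, heq ▸ hR2v1⟩
      · exact absurd ⟨v1, hpl, j + m, u1, hm, hR2v1⟩ H
    · push_neg at hcW
      obtain ⟨i, hi⟩ := hcW
      have hst : T.TauStar u (W i) := hW0 ▸ star_chain hWs (Nat.zero_le i)
      have hpl : T.TauPlus (W i) (W (i + 1)) := by
        rcases tauStar_cases (hWs i) with heq | hp
        · exact absurd heq.symm hi
        · exact hp
      exact ⟨W (i + 1), j + (i + 1), Relation.TransGen.trans_right hst hpl, hWR (i + 1), hWv (i + 1)⟩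
  · push_neg at hcY
    obtain ⟨i, hi⟩ := hcY
    have hst : T.TauStar v (Y i) := hY0 ▸ star_chain hYs (Nat.zero_le i)
    have hpl : T.TauPlus (Y i) (Y (i + 1)) := by
      rcases tauStar_cases (hYs i) with heq | hp
      · exact absurd heq.symm hi
      · exact hp
    exact absurd ⟨Y (i + 1), Relation.TransGen.trans_right hst hpl, j + (i + 1), W (i + 1),
      hWR (i + 1), hYR (i + 1)⟩ H

end DegDAux

section DegDAux2

variable {A : Type u} {T : LTS.{u, v} A} {R R1 R2 : T.S → T.S → Prop}

/-- the composition of relations -/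
def RComp (R1 R2 : T.S → T.S → Prop) : T.S → T.S → Prop :=
  fun s v => ∃ u, R1 s u ∧ R2 u v

/-- left divergence condition for the composition -/
lemma comp_div_left (hb1 : IsBranchingBisim T T R1)
    (hd1 : ∀ (f : ℕ → T.S) (s2 : T.S), (∀ i, T.TauStep (f i) (f (i + 1))) →
      (∀ i, R1 (f i) s2) → ∃ s2', T.TauPlus s2 s2' ∧ ∃ i, R1 (f i) s2')
    (hb2 : IsBranchingBisim T T R2)
    (hd2 : ∀ (f : ℕ → T.S) (s2 : T.S), (∀ i, T.TauStep (f i) (f (i + 1))) →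
      (∀ i, R2 (f i) s2) → ∃ s2', T.TauPlus s2 s2' ∧ ∃ i, R2 (f i) s2')
    (f : ℕ → T.S) (v : T.S) (hf : ∀ i, T.TauStep (f i) (f (i + 1)))
    (h : ∀ i, RComp R1 R2 (f i) v) :
    ∃ v', T.TauPlus v v' ∧ ∃ i, RComp R1 R2 (f i) v' := by
  by_contra H
  have H' : ¬ ∃ v', T.TauPlus v v' ∧ ∃ j u', R1 (f j) u' ∧ R2 u' v' := by
    rintro ⟨v', hp, j, u', h1, h2⟩
    exact H ⟨v', hp, j, u', h1, h2⟩
  -- iterate comp_progress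
  have key : ∀ p : {p : ℕ × T.S // R1 (f p.1) p.2 ∧ R2 p.2 v},
      ∃ q : {p : ℕ × T.S // R1 (f p.1) p.2 ∧ R2 p.2 v}, T.TauPlus p.1.2 q.1.2 := by
    rintro ⟨⟨j, u⟩, h1, h2⟩
    obtain ⟨u', j', hpl, h1', h2'⟩ := comp_progress hb1 hd1 hb2 f hf v H' h1 h2
    exact ⟨⟨⟨j', u'⟩, h1', h2'⟩, hpl⟩
  choose nxt hnxt using key
  obtain ⟨u0, h10, h20⟩ := h 0
  let seq : ℕ → {p : ℕ × T.S // R1 (f p.1) p.2 ∧ R2 p.2 v} :=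
    fun k => Nat.rec ⟨⟨0, u0⟩, h10, h20⟩ (fun _ p => nxt p) k
  have hz : ∀ k, T.TauPlus ((seq k).1.2) ((seq (k + 1)).1.2) := fun k => hnxt (seq k)
  have hzv : ∀ k, R2 ((seq k).1.2) v := fun k => (seq k).2.2
  obtain ⟨v', hv', k, hk⟩ := divpres_plus hb2 hd2 (fun k => (seq k).1.2) v hz hzv
  exact H' ⟨v', hv', (seq k).1.1, (seq k).1.2, (seq k).2.1, hk⟩

lemma comp_bisim (hb1 : IsBranchingBisim T T R1) (hb2 : IsBranchingBisim T T R2) :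
    IsBranchingBisim T T (RComp R1 R2) := by
  rintro s v ⟨u, h1, h2⟩
  constructor
  · intro a s' hs
    obtain ⟨x, x', hux, hstep, hR1x, hR1x'⟩ := (hb1 s u h1).1 a s' hs
    obtain ⟨y, hvy, hR2y⟩ := tauStar_transfer hb2 h2 hux
    rcases hstep with hstep | ⟨ha, hxx⟩
    · obtain ⟨y1, y2, hyy1, hstep2, hR2y1, hR2y2⟩ := (hb2 x y hR2y).1 a x' hstep
      exact ⟨y1, y2, hvy.trans hyy1, hstep2, ⟨x, hR1x, hR2y1⟩, ⟨x', hR1x', hR2y2⟩⟩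
    · subst hxx
      exact ⟨y, y, hvy, Or.inr ⟨ha, rfl⟩, ⟨x, hR1x, hR2y⟩, ⟨x, hR1x', hR2y⟩⟩
  · intro a v' hv
    obtain ⟨u'', u', huu'', hstep, hR2u'', hR2u'⟩ := (hb2 u v h2).2 a v' hv
    obtain ⟨s'', hss'', hR1s''⟩ := tauStar_transfer (bisim_flip hb1) (show (fun a b => R1 b a) u s from h1) huu''
    rcases hstep with hstep | ⟨ha, huu⟩
    · obtain ⟨s3, s3', hs3, hstep3, hR1s3, hR1s3'⟩ := (hb1 s'' u'' hR1s'').2 a u' hstep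
      exact ⟨s3, s3', hss''.trans hs3, hstep3, ⟨u'', hR1s3, hR2u''⟩, ⟨u', hR1s3', hR2u'⟩⟩
    · subst huu
      exact ⟨s'', s'', hss'', Or.inr ⟨ha, rfl⟩, ⟨u'', hR1s'', hR2u''⟩, ⟨u'', hR1s'', hR2u'⟩⟩

lemma comp_divpres (hb1 : IsBranchingBisim T T R1) (hd1 : IsDivPres T T R1)
    (hb2 : IsBranchingBisim T T R2) (hd2 : IsDivPres T T R2) :
    IsDivPres T T (RComp R1 R2) := by
  constructor
  · exact fun f v hf h => comp_div_left hb1 hd1.1 hb2 hd2.1 f v hf h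
  · intro s1 g hg h
    have h' : ∀ i, RComp (fun a b => R2 b a) (fun a b => R1 b a) (g i) s1 := by
      intro i
      obtain ⟨u, h1, h2⟩ := h i
      exact ⟨u, h2, h1⟩
    obtain ⟨s1', hs1', i, u, hu1, hu2⟩ := comp_div_left (bisim_flip hb2) (divpres_flip hd2).1
      (bisim_flip hb1) (divpres_flip hd1).1 g s1 hg h'
    exact ⟨s1', hs1', i, u, hu2, hu1⟩

lemma eq_bisim : IsBranchingBisim T T (Eq : T.S → T.S → Prop) := by
  rintro s1 s2 rfl
  constructor
  · intro a s1' hs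
    exact ⟨s1, s1', Relation.ReflTransGen.refl, Or.inl hs, rfl, rfl⟩
  · intro a s2' hs
    exact ⟨s1, s2', Relation.ReflTransGen.refl, Or.inl hs, rfl, rfl⟩

lemma eq_divpres : IsDivPres T T (Eq : T.S → T.S → Prop) := by
  constructor
  · intro f s2 hf hR
    refine ⟨s2, ?_, 1, hR 1⟩
    have := hf 0
    rw [hR 0, hR 1] at this
    exact Relation.TransGen.single this
  · intro s1 g hg hR
    refine ⟨s1, ?_, 1, hR 1⟩
    have := hg 0
    rw [← hR 0, ← hR 1] at this
    exact Relation.TransGen.single this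

lemma sbisimD_refl (s : T.S) : SBisimD T T s s := ⟨Eq, eq_bisim, eq_divpres, rfl⟩

lemma sbisimD_symm {s t : T.S} (h : SBisimD T T s t) : SBisimD T T t s := by
  obtain ⟨R, hb, hd, hR⟩ := h
  exact ⟨fun a b => R b a, bisim_flip hb, divpres_flip hd, hR⟩

lemma sbisimD_trans {s t r : T.S} (h1 : SBisimD T T s t) (h2 : SBisimD T T t r) :
    SBisimD T T s r := by
  obtain ⟨R1, hb1, hd1, hR1⟩ := h1
  obtain ⟨R2, hb2, hd2, hR2⟩ := h2
  exact ⟨RComp R1 R2, comp_bisim hb1 hb2, comp_divpres hb1 hd1 hb2 hd2, t, hR1, hR2⟩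

lemma eqClassD_eq_of_sbisimD {s' t' : T.S} (h : SBisimD T T s' t') :
    eqClassD T s' = eqClassD T t' := by
  ext u
  exact ⟨fun hu => sbisimD_trans (sbisimD_symm h) hu, fun hu => sbisimD_trans h hu⟩

lemma degD_mem_mono {s t : T.S} (h : SBisimD T T s t) (p : Option A × Set T.S)
    (hp : ∃ s'' s', T.TauStar s s'' ∧ T.step s'' p.1 s' ∧ SBisimD T T s s'' ∧
      (p.1 = none → ¬ SBisimD T T s'' s') ∧ p.2 = eqClassD T s') :
    ∃ t'' t', T.TauStar t t'' ∧ T.step t'' p.1 t' ∧ SBisimD T T t t'' ∧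
      (p.1 = none → ¬ SBisimD T T t'' t') ∧ p.2 = eqClassD T t' := by
  obtain ⟨s'', s', hstar, hstep, hss'', hne, hcls⟩ := hp
  have hts'' : SBisimD T T t s'' := sbisimD_trans (sbisimD_symm h) hss''
  obtain ⟨R, hbR, hdR, hR⟩ := hts''
  obtain ⟨t'', t', htt'', hopt, hRt'', hRt'⟩ := (hbR t s'' hR).2 p.1 s' hstep
  have hEt''s'' : SBisimD T T t'' s'' := ⟨R, hbR, hdR, hRt''⟩
  have hEt's' : SBisimD T T t' s' := ⟨R, hbR, hdR, hRt'⟩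
  rcases hopt with hstep' | ⟨ha, htt⟩
  · refine ⟨t'', t', htt'', hstep', ?_, ?_, ?_⟩
    · exact sbisimD_trans ⟨R, hbR, hdR, hR⟩ (sbisimD_symm hEt''s'')
    · intro hn hc
      exact hne hn (sbisimD_trans (sbisimD_symm hEt''s'')
        (sbisimD_trans hc hEt's'))
    · rw [hcls]
      exact eqClassD_eq_of_sbisimD (sbisimD_symm hEt's')
  · exfalso
    subst htt
    exact hne ha (sbisimD_trans (sbisimD_symm hEt''s'') hEt's')

end DegDAux2

theorem degD_eq_of_sBisimD {A : Type u} (T : LTS.{u, v} A) (s t : T.S)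
    (h : SBisimD T T s t) : degD T s = degD T t := by
  unfold degD
  exact Cardinal.mk_congr (Equiv.subtypeEquivRight fun p =>
    ⟨degD_mem_mono h p, degD_mem_mono (sbisimD_symm h) p⟩)
end

section
/- If an A_τ-labelled transition system T (over a finite set A_τ) has no divergence up to ≈Δ and is unboundedly branching up to ≈Δ, then T is not executable modulo ≈Δ: there is no reactive Turing machine M with T ≈Δ T(M). -/
set_option autoImplicit false

universe u v w x

/-! ### STATEMENT 10: a transition system without divergence up to ≈Δ that is
unboundedly branching up to ≈Δ is not executable modulo ≈Δ -/

namespace Step10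

open Relation

variable {A : Type u}

/-- dependent choice helper -/
lemma dc {α : Type*} (P : α → Prop) (Q : α → α → Prop)
    (h : ∀ x, P x → ∃ y, Q x y ∧ P y) (x0 : α) (h0 : P x0) :
    ∃ σ : ℕ → α, σ 0 = x0 ∧ (∀ i, P (σ i)) ∧ ∀ i, Q (σ i) (σ (i + 1)) := by
  choose f hf1 hf2 using h
  let g : ℕ → {x // P x} := fun n =>
    Nat.rec ⟨x0, h0⟩ (fun _ p => ⟨f p.1 p.2, hf2 p.1 p.2⟩) n
  exact ⟨fun n => (g n).1, rfl, fun i => (g i).2, fun i => hf1 (g i).1 (g i).2⟩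

lemma boundary {P : ℕ → Prop} (h0 : P 0) : ∀ {i : ℕ}, ¬ P i → ∃ n, P n ∧ ¬ P (n + 1) := by
  intro i
  induction i with
  | zero => exact fun h => absurd h0 h
  | succ n ih =>
    intro h
    by_cases hn : P n
    · exact ⟨n, hn, h⟩
    · exact ih hn

lemma optStep_star {T : LTS.{u, v} A} {s t : T.S} (h : T.OptStep s none t) : T.TauStar s t := by
  rcases h with h | ⟨_, rfl⟩
  · exact ReflTransGen.single h
  · exact ReflTransGen.refl

lemma tauStar_cases {T : LTS.{u, v} A} {s t : T.S} (h : T.TauStar s t) :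
    s = t ∨ T.TauPlus s t :=
  h.cases_head.imp id (fun ⟨c, h1, h2⟩ => Relation.TransGen.head' h1 h2)

lemma tauStar_eq_of_not_plus {T : LTS.{u, v} A} {s t : T.S} (h : T.TauStar s t)
    (hn : ¬ T.TauPlus s t) : t = s :=
  ((tauStar_cases h).resolve_right hn).symm

lemma sbisimD_bisim (T1 : LTS.{u, v} A) (T2 : LTS.{u, w} A) :
    IsBranchingBisim T1 T2 (SBisimD T1 T2) := by
  rintro s1 s2 ⟨R, hb, hdp, hR⟩
  constructor
  · intro a s1' hstep
    obtain ⟨s2'', s2', h1, h2, h3, h4⟩ := (hb s1 s2 hR).1 a s1' hstep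
    exact ⟨s2'', s2', h1, h2, ⟨R, hb, hdp, h3⟩, ⟨R, hb, hdp, h4⟩⟩
  · intro a s2' hstep
    obtain ⟨s1'', s1', h1, h2, h3, h4⟩ := (hb s1 s2 hR).2 a s2' hstep
    exact ⟨s1'', s1', h1, h2, ⟨R, hb, hdp, h3⟩, ⟨R, hb, hdp, h4⟩⟩

lemma isBranchingBisim_flip {T1 : LTS.{u, v} A} {T2 : LTS.{u, w} A}
    {R : T1.S → T2.S → Prop} (h : IsBranchingBisim T1 T2 R) :
    IsBranchingBisim T2 T1 (fun b a => R a b) :=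
  fun s2 s1 hr => ⟨(h s1 s2 hr).2, (h s1 s2 hr).1⟩

lemma isDivPres_flip {T1 : LTS.{u, v} A} {T2 : LTS.{u, w} A}
    {R : T1.S → T2.S → Prop} (h : IsDivPres T1 T2 R) :
    IsDivPres T2 T1 (fun b a => R a b) :=
  ⟨fun f s hf hr => h.2 s f hf hr, fun s g hg hr => h.1 g s hg hr⟩

lemma sbisimD_symm {T1 : LTS.{u, v} A} {T2 : LTS.{u, w} A} {s : T1.S} {t : T2.S}
    (h : SBisimD T1 T2 s t) : SBisimD T2 T1 t s := by
  obtain ⟨R, hb, hdp, hR⟩ := h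
  exact ⟨fun b a => R a b, isBranchingBisim_flip hb, isDivPres_flip hdp, hR⟩

lemma sbisimD_refl (T : LTS.{u, v} A) (s : T.S) : SBisimD T T s s := by
  refine ⟨Eq, ?_, ?_, rfl⟩
  · rintro s1 s2 rfl
    constructor
    · intro a s1' hstep
      exact ⟨s1, s1', ReflTransGen.refl, Or.inl hstep, rfl, rfl⟩
    · intro a s2' hstep
      exact ⟨s1, s2', ReflTransGen.refl, Or.inl hstep, rfl, rfl⟩
  · constructor
    · rintro f s2 hf h
      have hs := hf 0
      rw [h 0, h 1] at hs
      exact ⟨s2, Relation.TransGen.single hs, 0, h 0⟩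
    · rintro s1 g hg h
      have hs := hg 0
      rw [← h 0, ← h 1] at hs
      exact ⟨s1, Relation.TransGen.single hs, 0, h 0⟩

end Step10
namespace Step10

variable {A : Type u}

/-- simulate a τ-path on the left of a branching bisimulation -/
lemma help_left {T1 : LTS.{u, v} A} {T2 : LTS.{u, w} A} {R : T1.S → T2.S → Prop}
    (hb : IsBranchingBisim T1 T2 R) {x x' : T1.S} (hst : T1.TauStar x x') :
    ∀ {z : T2.S}, R x z → ∃ z', T2.TauStar z z' ∧ R x' z' := by
  induction hst with
  | refl => exact fun h => ⟨_, Relation.ReflTransGen.refl, h⟩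
  | tail h1 h2 ih =>
    intro z hR
    obtain ⟨z1, hz1, hR1⟩ := ih hR
    obtain ⟨z'', z', ha, hb', _, hd'⟩ := (hb _ _ hR1).1 none _ h2
    exact ⟨z', hz1.trans (ha.trans (optStep_star hb')), hd'⟩

/-- simulate a τ-path on the right of a branching bisimulation -/
lemma help_right {T1 : LTS.{u, v} A} {T2 : LTS.{u, w} A} {R : T1.S → T2.S → Prop}
    (hb : IsBranchingBisim T1 T2 R) {z z' : T2.S} (hst : T2.TauStar z z') :
    ∀ {x : T1.S}, R x z → ∃ x', T1.TauStar x x' ∧ R x' z' := by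
  induction hst with
  | refl => exact fun h => ⟨_, Relation.ReflTransGen.refl, h⟩
  | tail h1 h2 ih =>
    intro x hR
    obtain ⟨x1, hx1, hR1⟩ := ih hR
    obtain ⟨x'', x', ha, hb', _, hd'⟩ := (hb _ _ hR1).2 none _ h2
    exact ⟨x', hx1.trans (ha.trans (optStep_star hb')), hd'⟩

/-- simulate an infinite τ-sequence on the right of a branching bisimulation -/
lemma sim_seq {T1 : LTS.{u, v} A} {T2 : LTS.{u, w} A} {R : T1.S → T2.S → Prop}
    (hb : IsBranchingBisim T1 T2 R) (g : ℕ → T2.S)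
    (hg : ∀ i, T2.TauStep (g i) (g (i + 1))) {x0 : T1.S} (h0 : R x0 (g 0)) :
    ∃ σ : ℕ → T1.S, σ 0 = x0 ∧ (∀ i, R (σ i) (g i)) ∧ ∀ i, T1.TauStar (σ i) (σ (i + 1)) := by
  have step : ∀ (n : ℕ) (x : T1.S), R x (g n) → ∃ y, T1.TauStar x y ∧ R y (g (n + 1)) := by
    intro n x hx
    obtain ⟨x'', x', h1, h2, _, h4⟩ := (hb x (g n) hx).2 none (g (n + 1)) (hg n)
    exact ⟨x', h1.trans (optStep_star h2), h4⟩
  choose F hF1 hF2 using step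
  let σ : (n : ℕ) → {x : T1.S // R x (g n)} := fun n =>
    Nat.rec ⟨x0, h0⟩ (fun n p => ⟨F n p.1 p.2, hF2 n p.1 p.2⟩) n
  exact ⟨fun n => (σ n).1, rfl, fun i => (σ i).2, fun i => hF1 i (σ i).1 (σ i).2⟩

lemma sbisimD_divPres (T1 : LTS.{u, v} A) (T2 : LTS.{u, w} A) :
    IsDivPres T1 T2 (SBisimD T1 T2) := by
  constructor
  · intro f s2 hf h
    obtain ⟨R, hb, hdp, hR⟩ := h 0
    obtain ⟨σ, hσ0, hσR, hσs⟩ :=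
      sim_seq (isBranchingBisim_flip hb) f hf (x0 := s2) hR
    by_cases hp : ∃ i, T2.TauPlus s2 (σ i)
    · obtain ⟨i, hi⟩ := hp
      exact ⟨σ i, hi, i, ⟨R, hb, hdp, hσR i⟩⟩
    · push_neg at hp
      have hstar : ∀ i, T2.TauStar s2 (σ i) := by
        intro i
        induction i with
        | zero => exact hσ0 ▸ Relation.ReflTransGen.refl
        | succ n ih => exact ih.trans (hσs n)
      have heq : ∀ i, σ i = s2 := fun i => tauStar_eq_of_not_plus (hstar i) (hp i)
      obtain ⟨s2', hp', i, hi⟩ := hdp.1 f s2 hf (fun i => heq i ▸ hσR i)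
      exact ⟨s2', hp', i, ⟨R, hb, hdp, hi⟩⟩
  · intro s1 g hg h
    obtain ⟨R, hb, hdp, hR⟩ := h 0
    obtain ⟨σ, hσ0, hσR, hσs⟩ := sim_seq hb g hg (x0 := s1) hR
    by_cases hp : ∃ i, T1.TauPlus s1 (σ i)
    · obtain ⟨i, hi⟩ := hp
      exact ⟨σ i, hi, i, ⟨R, hb, hdp, hσR i⟩⟩
    · push_neg at hp
      have hstar : ∀ i, T1.TauStar s1 (σ i) := by
        intro i
        induction i with
        | zero => exact hσ0 ▸ Relation.ReflTransGen.refl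
        | succ n ih => exact ih.trans (hσs n)
      have heq : ∀ i, σ i = s1 := fun i => tauStar_eq_of_not_plus (hstar i) (hp i)
      obtain ⟨s1', hp', i, hi⟩ := hdp.2 s1 g hg (fun i => heq i ▸ hσR i)
      exact ⟨s1', hp', i, ⟨R, hb, hdp, hi⟩⟩

end Step10
namespace Step10

variable {A : Type u}

/-- the stuttering property of divergence-preserving branching bisimilarity -/
lemma stuttering {T1 : LTS.{u, v} A} {T2 : LTS.{u, w} A} {r : T1.S} {t0 u t1 : T2.S}
    (h0 : SBisimD T1 T2 r t0) (p1 : T2.TauStar t0 u) (p2 : T2.TauStar u t1)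
    (h1 : SBisimD T1 T2 r t1) : SBisimD T1 T2 r u := by
  classical
  set B : T1.S → T2.S → Prop := fun r u => SBisimD T1 T2 r u ∨
    ∃ t0 t1, SBisimD T1 T2 r t0 ∧ T2.TauStar t0 u ∧ T2.TauStar u t1 ∧ SBisimD T1 T2 r t1
    with hB
  have hBb : IsBranchingBisim T1 T2 B := by
    rintro s1 s2 (h | ⟨a0, a1, ha0, hp1, hp2, ha1⟩)
    · constructor
      · intro a s1' hstep
        obtain ⟨s2'', s2', h1', h2, h3, h4⟩ := (sbisimD_bisim T1 T2 s1 s2 h).1 a s1' hstep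
        exact ⟨s2'', s2', h1', h2, Or.inl h3, Or.inl h4⟩
      · intro a s2' hstep
        obtain ⟨s1'', s1', h1', h2, h3, h4⟩ := (sbisimD_bisim T1 T2 s1 s2 h).2 a s2' hstep
        exact ⟨s1'', s1', h1', h2, Or.inl h3, Or.inl h4⟩
    · constructor
      · intro a s1' hstep
        obtain ⟨s2'', s2', h1', h2, h3, h4⟩ := (sbisimD_bisim T1 T2 s1 a1 ha1).1 a s1' hstep
        exact ⟨s2'', s2', hp2.trans h1', h2, Or.inl h3, Or.inl h4⟩
      · intro a s2' hstep
        obtain ⟨ρ, hρstar, hρ⟩ := help_right (sbisimD_bisim T1 T2) hp1 ha0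
        obtain ⟨r'', r', h1', h2, h3, h4⟩ := (sbisimD_bisim T1 T2 ρ s2 hρ).2 a s2' hstep
        exact ⟨r'', r', hρstar.trans h1', h2, Or.inl h3, Or.inl h4⟩
  have hBd : IsDivPres T1 T2 B := by
    constructor
    · intro f t hf h
      by_cases hall : ∀ i, SBisimD T1 T2 (f i) t
      · obtain ⟨t', hp, i, hi⟩ := (sbisimD_divPres T1 T2).1 f t hf hall
        exact ⟨t', hp, i, Or.inl hi⟩
      · push_neg at hall
        obtain ⟨i, hi⟩ := hall
        rcases h i with h' | ⟨a0, a1, ha0, hp1, hp2, ha1⟩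
        · exact absurd h' hi
        · rcases tauStar_cases hp2 with rfl | hplus
          · exact absurd ha1 hi
          · exact ⟨a1, hplus, i, Or.inl ha1⟩
    · intro s1 g hg h
      have hx : ∃ x, SBisimD T1 T2 s1 x ∧ T2.TauStar x (g 0) := by
        rcases h 0 with h' | ⟨a0, a1, ha0, hp1, _, _⟩
        · exact ⟨g 0, h', Relation.ReflTransGen.refl⟩
        · exact ⟨a0, ha0, hp1⟩
      obtain ⟨x, hsx, hxg⟩ := hx
      obtain ⟨ρ, hρstar, hρ⟩ := help_right (sbisimD_bisim T1 T2) hxg hsx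
      obtain ⟨σ, hσ0, hσR, hσs⟩ := sim_seq (sbisimD_bisim T1 T2) g hg (x0 := ρ) hρ
      have hstar : ∀ i, T1.TauStar s1 (σ i) := by
        intro i
        induction i with
        | zero => exact hσ0 ▸ hρstar
        | succ n ih => exact ih.trans (hσs n)
      by_cases hp : ∃ i, T1.TauPlus s1 (σ i)
      · obtain ⟨i, hi⟩ := hp
        exact ⟨σ i, hi, i, Or.inl (hσR i)⟩
      · push_neg at hp
        have heq : ∀ i, σ i = s1 := fun i => tauStar_eq_of_not_plus (hstar i) (hp i)
        obtain ⟨s1', hp', i, hi⟩ := (sbisimD_divPres T1 T2).2 s1 g hg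
          (fun i => heq i ▸ hσR i)
        exact ⟨s1', hp', i, Or.inl hi⟩
  exact ⟨B, hBb, hBd, Or.inr ⟨t0, t1, h0, p1, p2, h1⟩⟩

end Step10
namespace Step10

variable {A : Type u}

lemma comp_bisim (T1 : LTS.{u, v} A) (T2 : LTS.{u, w} A) (T3 : LTS.{u, x} A) :
    IsBranchingBisim T1 T3
      (fun s w => ∃ u, SBisimD T1 T2 s u ∧ SBisimD T2 T3 u w) := by
  rintro s w ⟨u, h12, h23⟩
  constructor
  · intro a s' hstep
    obtain ⟨u'', u', hstar, hopt, hsu'', hs'u'⟩ := (sbisimD_bisim T1 T2 s u h12).1 a s' hstep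
    obtain ⟨ω, hωstar, hω⟩ := help_left (sbisimD_bisim T2 T3) hstar h23
    rcases hopt with hreal | ⟨ha, heq⟩
    · obtain ⟨ω'', ω', h1, h2, h3, h4⟩ := (sbisimD_bisim T2 T3 u'' ω hω).1 a u' hreal
      exact ⟨ω'', ω', hωstar.trans h1, h2, ⟨u'', hsu'', h3⟩, ⟨u', hs'u', h4⟩⟩
    · exact ⟨ω, ω, hωstar, Or.inr ⟨ha, rfl⟩, ⟨u'', hsu'', hω⟩, ⟨u', hs'u', heq ▸ hω⟩⟩
  · intro a w' hstep
    obtain ⟨u'', u', hstar, hopt, hu''w, hu'w'⟩ := (sbisimD_bisim T2 T3 u w h23).2 a w' hstep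
    obtain ⟨ρ, hρstar, hρ⟩ := help_right (sbisimD_bisim T1 T2) hstar h12
    rcases hopt with hreal | ⟨ha, heq⟩
    · obtain ⟨r'', r', h1, h2, h3, h4⟩ := (sbisimD_bisim T1 T2 ρ u'' hρ).2 a u' hreal
      exact ⟨r'', r', hρstar.trans h1, h2, ⟨u'', h3, hu''w⟩, ⟨u', h4, hu'w'⟩⟩
    · exact ⟨ρ, ρ, hρstar, Or.inr ⟨ha, rfl⟩, ⟨u'', hρ, hu''w⟩, ⟨u', heq ▸ hρ, hu'w'⟩⟩

lemma comp_div1 (T1 : LTS.{u, v} A) (T2 : LTS.{u, w} A) (T3 : LTS.{u, x} A)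
    (f : ℕ → T1.S) (w : T3.S) (hf : ∀ i, T1.TauStep (f i) (f (i + 1)))
    (h : ∀ i, ∃ u, SBisimD T1 T2 (f i) u ∧ SBisimD T2 T3 u w) :
    ∃ w', T3.TauPlus w w' ∧ ∃ i u, SBisimD T1 T2 (f i) u ∧ SBisimD T2 T3 u w' := by
  classical
  by_contra hC
  -- S2 : states of T2 still related to w and to some state of the divergence
  set S2 : T2.S → Prop := fun m =>
    SBisimD T2 T3 m w ∧ ∃ k, SBisimD T1 T2 (f k) m with hS2def
  have hstep : ∀ m, S2 m → ∃ m', T2.TauStep m m' ∧ S2 m' := by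
    rintro m ⟨hmw, k, hkm⟩
    -- first: find a τ-successor of m still related to the divergence
    have hx : ∃ x, T2.TauStep m x ∧ ∃ j, SBisimD T1 T2 (f j) x := by
      by_cases hall : ∀ i, SBisimD T1 T2 (f (k + i)) m
      · obtain ⟨m1, hplus, j, hj⟩ := (sbisimD_divPres T1 T2).1 (fun i => f (k + i)) m
          (fun i => hf (k + i)) hall
        obtain ⟨x, hstep1, hrest⟩ := Relation.TransGen.head'_iff.mp hplus
        exact ⟨x, hstep1, k + j,
          stuttering (hall j) (Relation.ReflTransGen.single hstep1) hrest hj⟩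
      · push_neg at hall
        obtain ⟨i, hi⟩ := hall
        obtain ⟨n, hn, hn1⟩ := boundary (P := fun i => SBisimD T1 T2 (f (k + i)) m)
          (by simpa using hkm) hi
        obtain ⟨m'', mx, hstar, hopt, hmid, hnext⟩ :=
          (sbisimD_bisim T1 T2 (f (k + n)) m hn).1 none (f (k + n + 1)) (hf (k + n))
        rcases hstar.cases_head with heq | ⟨c, hstep1, hrest⟩
        · rcases hopt with hreal | ⟨_, heq2⟩
          · exact ⟨mx, heq ▸ hreal, k + n + 1, hnext⟩
          · exact absurd (by rw [← heq2, ← heq] at hnext; exact hnext) hn1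
        · exact ⟨c, hstep1, k + n,
            stuttering hn (Relation.ReflTransGen.single hstep1) hrest hmid⟩
    obtain ⟨x, hmx, j, hjx⟩ := hx
    -- x is still related to w, otherwise w would have made progress
    obtain ⟨w'', w', hstar, hopt, _, hw2⟩ := (sbisimD_bisim T2 T3 m w hmw).1 none x hmx
    have hww' : T3.TauStar w w' := hstar.trans (optStep_star hopt)
    rcases tauStar_cases hww' with heq | hplus
    · exact ⟨x, hmx, heq ▸ hw2, j, hjx⟩
    · exact absurd ⟨w', hplus, j, x, hjx, hw2⟩ hC
  obtain ⟨u0, h12, h23⟩ := h 0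
  obtain ⟨σ, _, hP, hQ⟩ := dc S2 (fun a b => T2.TauStep a b) hstep u0 ⟨h23, 0, h12⟩
  obtain ⟨w', hplus, i, hi⟩ := (sbisimD_divPres T2 T3).1 σ w hQ (fun i => (hP i).1)
  obtain ⟨k, hk⟩ := (hP i).2
  exact hC ⟨w', hplus, k, σ i, hk, hi⟩

lemma sbisimD_trans {T1 : LTS.{u, v} A} {T2 : LTS.{u, w} A} {T3 : LTS.{u, x} A}
    {s : T1.S} {t : T2.S} {r : T3.S}
    (h1 : SBisimD T1 T2 s t) (h2 : SBisimD T2 T3 t r) : SBisimD T1 T3 s r := by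
  refine ⟨fun s w => ∃ u, SBisimD T1 T2 s u ∧ SBisimD T2 T3 u w,
    comp_bisim T1 T2 T3, ⟨?_, ?_⟩, t, h1, h2⟩
  · exact fun f w hf h => comp_div1 T1 T2 T3 f w hf h
  · intro s1 g hg h
    have h' : ∀ i, ∃ u, SBisimD T3 T2 (g i) u ∧ SBisimD T2 T1 u s1 := by
      intro i
      obtain ⟨u, hu1, hu2⟩ := h i
      exact ⟨u, sbisimD_symm hu2, sbisimD_symm hu1⟩
    obtain ⟨s1', hplus, i, u, hu1, hu2⟩ := comp_div1 T3 T2 T1 g s1 hg h'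
    exact ⟨s1', hplus, i, u, sbisimD_symm hu2, sbisimD_symm hu1⟩

end Step10
namespace Step10

variable {A : Type u}

lemma rtm_bound (M : RTM A) : ∃ N : ℕ, ∀ c : M.lts.S,
    ∃ φ : {q : Option A × M.lts.S // M.lts.step c q.1 q.2} → Fin N, Function.Injective φ := by
  classical
  haveI : Fintype M.rules := M.finRules.fintype
  refine ⟨Fintype.card M.rules, fun c => ?_⟩
  let next : (M.Q × Option M.D × Option A × Option M.D × Bool × M.Q) → Option A × M.lts.S :=
    fun r => (r.2.2.1, cond r.2.2.2.2.1
      (r.2.2.2.2.2, r.2.2.2.1 :: c.2.1, c.2.2.2.headD none, c.2.2.2.tail)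
      (r.2.2.2.2.2, c.2.1.tail, c.2.1.headD none, r.2.2.2.1 :: c.2.2.2))
  have key : ∀ q : {q : Option A × M.lts.S // M.lts.step c q.1 q.2},
      ∃ r : M.rules, next r = q.1 := by
    rintro ⟨⟨a, c'⟩, e, t, (⟨hmem, hc'⟩ | ⟨hmem, hc'⟩)⟩
    · exact ⟨⟨(c.1, c.2.2.1, a, e, false, t), hmem⟩, Prod.ext rfl hc'.symm⟩
    · exact ⟨⟨(c.1, c.2.2.1, a, e, true, t), hmem⟩, Prod.ext rfl hc'.symm⟩
  choose ψ hψ using key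
  refine ⟨fun q => (Fintype.equivFin M.rules) (ψ q), fun q1 q2 h => ?_⟩
  have hψeq : ψ q1 = ψ q2 := (Fintype.equivFin M.rules).injective h
  refine Subtype.ext ((hψ q1).symm.trans ?_)
  rw [hψeq]
  exact hψ q2

lemma reach_transfer {T1 : LTS.{u, v} A} {T2 : LTS.{u, w} A}
    (hinit : SBisimD T1 T2 T1.init T2.init) {s : T1.S} (h : T1.Reachable s) :
    ∃ t, SBisimD T1 T2 s t := by
  induction h with
  | refl => exact ⟨T2.init, hinit⟩
  | tail _ hstep ih =>
    obtain ⟨t, ht⟩ := ih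
    obtain ⟨a, hstep⟩ := hstep
    obtain ⟨t'', t', _, _, _, h4⟩ := (sbisimD_bisim T1 T2 _ t ht).1 a _ hstep
    exact ⟨t', h4⟩

lemma eqClassD_eq {T : LTS.{u, v} A} {x y : T.S} (h : SBisimD T T x y) :
    eqClassD T x = eqClassD T y := by
  ext z
  exact ⟨fun hz => sbisimD_trans (sbisimD_symm h) hz, fun hz => sbisimD_trans h hz⟩

end Step10
theorem not_executable_of_unboundedly_branching {A : Type u} [Finite A] (T : LTS.{u, v} A)
    (hd : ¬ HasDivergenceD T)
    (hub : ∀ B : ℕ, ∃ s, T.Reachable s ∧ (B : Cardinal) < degD T s) :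
    ¬ ∃ M : RTM A, BranchingBisimilarD T M.lts := by
  classical
  rintro ⟨M, R, hb, hdp, hR⟩
  have hinit : SBisimD T M.lts T.init M.lts.init := ⟨R, hb, hdp, hR⟩
  obtain ⟨N, hN⟩ := Step10.rtm_bound M
  obtain ⟨s, hreach, hdeg⟩ := hub N
  obtain ⟨t, hst⟩ := Step10.reach_transfer hinit hreach
  -- a τ*-successor of t that is still related to s but has no τ-successor related to s
  have htstar : ∃ tstar, M.lts.TauStar t tstar ∧ SBisimD T M.lts s tstar ∧
      ∀ x, M.lts.TauStep tstar x → ¬ SBisimD T M.lts s x := by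
    by_contra hno
    push_neg at hno
    obtain ⟨g, hg0, hgP, hgQ⟩ := Step10.dc
      (fun u => M.lts.TauStar t u ∧ SBisimD T M.lts s u) (fun a b => M.lts.TauStep a b)
      (fun u hu => by
        obtain ⟨x, hx1, hx2⟩ := hno u hu.1 hu.2
        exact ⟨x, hx1, hu.1.tail hx1, hx2⟩) t ⟨Relation.ReflTransGen.refl, hst⟩
    have hWg : ∀ j, SBisimD T M.lts s (g j) := fun j => (hgP j).2
    -- build a divergence up to ≈Δ in T
    have hDstep : ∀ σ, (T.Reachable σ ∧ SBisimD T T s σ ∧ ∀ j, SBisimD T M.lts σ (g j)) →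
        ∃ x, T.TauStep σ x ∧
          (T.Reachable x ∧ SBisimD T T s x ∧ ∀ j, SBisimD T M.lts x (g j)) := by
      rintro σ ⟨hσr, hsσ, hσW⟩
      obtain ⟨σs, hplus, i, hi⟩ := (Step10.sbisimD_divPres T M.lts).2 σ g hgQ hσW
      obtain ⟨x, hstep1, hrest⟩ := Relation.TransGen.head'_iff.mp hplus
      have hsσs : SBisimD T T s σs :=
        Step10.sbisimD_trans (hWg i) (Step10.sbisimD_symm hi)
      have hsx : SBisimD T T s x :=
        Step10.stuttering hsσ (Relation.ReflTransGen.single hstep1) hrest hsσs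
      exact ⟨x, hstep1, hσr.tail ⟨none, hstep1⟩, hsx,
        fun j => Step10.sbisimD_trans (Step10.sbisimD_symm hsx) (hWg j)⟩
    obtain ⟨f, _, hfP, hfQ⟩ := Step10.dc _ (fun a b => T.TauStep a b) hDstep s
      ⟨hreach, Step10.sbisimD_refl T s, hWg⟩
    exact hd ⟨f, fun i => (hfP i).1, hfQ, fun i j =>
      Step10.sbisimD_trans (Step10.sbisimD_symm (hfP i).2.1) ((hfP j).2.1)⟩
  obtain ⟨tstar, htt, hWts, hmax⟩ := htstar
  obtain ⟨φ0, hφ0⟩ := hN tstar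
  -- map every branching option of s to a transition of tstar
  have key : ∀ p : {p : Option A × Set T.S //
      ∃ s'' s', T.TauStar s s'' ∧ T.step s'' p.1 s' ∧ SBisimD T T s s'' ∧
        (p.1 = none → ¬ SBisimD T T s'' s') ∧ p.2 = eqClassD T s'},
      ∃ q : {q : Option A × M.lts.S // M.lts.step tstar q.1 q.2},
        q.1.1 = p.1.1 ∧ ∃ s', p.1.2 = eqClassD T s' ∧ SBisimD T M.lts s' q.1.2 := by
    rintro ⟨⟨a, C⟩, s'', s', hstar, hstep, hss'', hne, hC⟩
    have hs''t : SBisimD T M.lts s'' tstar :=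
      Step10.sbisimD_trans (Step10.sbisimD_symm hss'') hWts
    obtain ⟨t'', t', h1, h2, h3, h4⟩ :=
      (Step10.sbisimD_bisim T M.lts s'' tstar hs''t).1 a s' hstep
    have ht'' : t'' = tstar := by
      rcases h1.cases_head with heq | ⟨c, hstep1, hrest⟩
      · exact heq.symm
      · exfalso
        have hst'' : SBisimD T M.lts s t'' := Step10.sbisimD_trans hss'' h3
        exact hmax c hstep1
          (Step10.stuttering hWts (Relation.ReflTransGen.single hstep1) hrest hst'')
    subst ht''
    rcases h2 with hreal | ⟨ha, heq⟩
    · exact ⟨⟨(a, t'), hreal⟩, rfl, s', hC, h4⟩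
    · exfalso
      have h5 : SBisimD T M.lts s' t'' := by rw [heq]; exact h4
      exact hne ha (Step10.sbisimD_trans h3 (Step10.sbisimD_symm h5))
  choose φ hφa hφC using key
  have hinj : Function.Injective fun p => φ0 (φ p) := by
    intro p1 p2 h
    have hq : φ p1 = φ p2 := hφ0 h
    obtain ⟨s1', hC1, hW1⟩ := hφC p1
    obtain ⟨s2', hC2, hW2⟩ := hφC p2
    have ha : p1.1.1 = p2.1.1 := by rw [← hφa p1, ← hφa p2, hq]
    have hW2' : SBisimD T M.lts s2' (φ p1).1.2 := by rw [hq]; exact hW2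
    have hs12 : SBisimD T T s1' s2' :=
      Step10.sbisimD_trans hW1 (Step10.sbisimD_symm hW2')
    have hCeq : p1.1.2 = p2.1.2 := by
      rw [hC1, hC2]; exact Step10.eqClassD_eq hs12
    exact Subtype.ext (Prod.ext ha hCeq)
  have hle : degD T s ≤ (N : Cardinal) := by
    have hmk : degD T s ≤ Cardinal.mk (ULift.{max u v} (Fin N)) :=
      Cardinal.mk_le_of_injective
        (f := fun p => (ULift.up.{max u v} (φ0 (φ p))))
        (fun p1 p2 h => hinj (congrArg ULift.down h))
    have hfin : Cardinal.mk (ULift.{max u v} (Fin N)) = (N : Cardinal) := by simp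
    exact hmk.trans hfin.le
  exact absurd hdeg (not_lt.mpr hle)
end

section
/- Let T be the transition system with action set A = {in(n), out(n) | n ∈ ℕ}, states {⊥} ∪ {q_n | n ∈ ℕ} ∪ {∗}, initial state ⊥, and transitions ⊥ →in(n) q_n and q_n →out(n) ∗ for every n ∈ ℕ (this is the transition system of the π-term x(y).ȳ.0, where in(n) is input of name n on channel x and out(n) is output on channel n). Then there is no generalized reactive Turing machine M with a finite set of control states and a finite tape alphabet (but possibly infinitely many actions and infinitely many transition rules) such that T(M) ≈b T. -/
set_option autoImplicit false

universe u v w x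

/-! ### STATEMENT 14: the behaviour of the π-term x(y).ȳ.0 cannot be simulated, up to
branching bisimilarity, by a generalized RTM with finitely many control states and
finitely many tape symbols (even if it has infinitely many actions and rules). -/

/-- the actions in(n) and out(n) for n ∈ ℕ -/
inductive L14 : Type
  | inp : ℕ → L14
  | out : ℕ → L14
  deriving DecidableEq

/-- the states ⊥, q_n (n ∈ ℕ) and ∗ -/
inductive S14 : Type
  | bot : S14
  | q : ℕ → S14
  | star : S14
  deriving DecidableEq

/-- the transition system of the π-term x(y).ȳ.0 :
⊥ →in(n) q_n and q_n →out(n) ∗ for every n ∈ ℕ -/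
def T14 : LTS.{0, 0} L14 where
  S := S14
  init := S14.bot
  step := fun s a t =>
    (∃ n : ℕ, s = S14.bot ∧ a = some (L14.inp n) ∧ t = S14.q n) ∨
    (∃ n : ℕ, s = S14.q n ∧ a = some (L14.out n) ∧ t = S14.star)

/-!
After `in(n)` the machine must reach a configuration related to `q_n` that performs `out(n)`;
since `T14` has no τ-steps, a configuration related to `q_n` can perform no other `out(m)`.
Whether a configuration can perform an action depends only on its control state and the
symbol under its head, so `n` is determined by such a pair: `ℕ` would inject into the finite
set `M.Q × Option M.D`.
-/

namespace LTS

variable {A : Type u}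

theorem optStep_some_iff (T : LTS.{u, v} A) {s t : T.S} {a : A} :
    T.OptStep s (some a) t ↔ T.step s (some a) t := by
  simp [OptStep]

end LTS

namespace IsBranchingBisim

variable {A : Type u} {T1 : LTS.{u, v} A} {T2 : LTS.{u, w} A} {R : T1.S → T2.S → Prop}

theorem exists_step_left (hR : IsBranchingBisim T1 T2 R) {s1 : T1.S} {s2 : T2.S}
    (h : R s1 s2) {a : A} {s1' : T1.S} (hs : T1.step s1 (some a) s1') :
    ∃ s2'' s2', T2.TauStar s2 s2'' ∧ T2.step s2'' (some a) s2' := by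
  obtain ⟨s2'', s2', hτ, hstep, -⟩ := (hR s1 s2 h).1 _ _ hs
  exact ⟨s2'', s2', hτ, T2.optStep_some_iff.1 hstep⟩

theorem exists_step_right (hR : IsBranchingBisim T1 T2 R) {s1 : T1.S} {s2 : T2.S}
    (h : R s1 s2) {a : A} {s2' : T2.S} (hs : T2.step s2 (some a) s2') :
    ∃ s1'' s1', T1.TauStar s1 s1'' ∧ T1.step s1'' (some a) s1' ∧ R s1'' s2 ∧ R s1' s2' := by
  obtain ⟨s1'', s1', hτ, hstep, hR'', hR'⟩ := (hR s1 s2 h).2 _ _ hs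
  exact ⟨s1'', s1', hτ, T1.optStep_some_iff.1 hstep, hR'', hR'⟩

end IsBranchingBisim

namespace GRTM

variable {A : Type u}

def Enables (M : GRTM A) (s : M.Q) (d : Option M.D) (a : Option A) : Prop :=
  ∃ e mv t, (s, d, a, e, mv, t) ∈ M.rules

theorem exists_lts_step_iff (M : GRTM A) (c : M.Conf) (a : Option A) :
    (∃ c', M.lts.step c a c') ↔ M.Enables c.1 c.2.2.1 a := by
  constructor
  · rintro ⟨c', e, t, ⟨hmem, -⟩ | ⟨hmem, -⟩⟩
    exacts [⟨e, false, t, hmem⟩, ⟨e, true, t, hmem⟩]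
  · rintro ⟨e, (_ | _), t, hmem⟩
    exacts [⟨_, e, t, Or.inl ⟨hmem, rfl⟩⟩, ⟨_, e, t, Or.inr ⟨hmem, rfl⟩⟩]

end GRTM

namespace T14

theorem step_bot_inp (n : ℕ) : T14.step S14.bot (some (L14.inp n)) (S14.q n) :=
  Or.inl ⟨n, rfl, rfl, rfl⟩

theorem step_q_out (n : ℕ) : T14.step (S14.q n) (some (L14.out n)) S14.star :=
  Or.inr ⟨n, rfl, rfl, rfl⟩

theorem eq_out_of_step_q {n : ℕ} {a : L14} {t : S14} (h : T14.step (S14.q n) (some a) t) :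
    a = L14.out n := by
  rcases h with ⟨k, hs, -⟩ | ⟨k, hs, ha, -⟩
  · cases hs
  · cases hs
    exact Option.some.inj ha

theorem not_tauStep (s t : S14) : ¬ T14.TauStep s t := by
  rintro (⟨n, -, h, -⟩ | ⟨n, -, h, -⟩) <;> cases h

theorem eq_of_tauStar {s t : S14} (h : T14.TauStar s t) : s = t := by
  induction h with
  | refl => rfl
  | tail _ hst _ => exact absurd hst (not_tauStep _ _)

variable {T : LTS.{0, v} L14} {R : T.S → T14.S → Prop}

theorem exists_related_step_out (hR : IsBranchingBisim T T14 R) {s : T.S}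
    (h : R s S14.bot) (n : ℕ) :
    ∃ c c', R c (S14.q n) ∧ T.step c (some (L14.out n)) c' := by
  obtain ⟨-, c, -, -, -, hc⟩ := hR.exists_step_right h (step_bot_inp n)
  obtain ⟨c'', c', -, hstep, hc'', -⟩ := hR.exists_step_right hc (step_q_out n)
  exact ⟨c'', c', hc'', hstep⟩

theorem eq_of_related_step_out (hR : IsBranchingBisim T T14 R) {s s' : T.S} {n m : ℕ}
    (h : R s (S14.q n)) (hs : T.step s (some (L14.out m)) s') : m = n := by
  obtain ⟨t'', t', hτ, hstep⟩ := hR.exists_step_left h hs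
  rw [← eq_of_tauStar hτ] at hstep
  exact L14.out.inj (eq_out_of_step_q hstep)

end T14

theorem no_finite_state_grtm_for_T14 (M : GRTM L14)
    (hQ : Finite M.Q) (hD : Finite M.D) :
    ¬ BranchingBisimilar M.lts T14 := by
  rintro ⟨R, hR, hinit⟩
  choose c c' hcR hc using T14.exists_related_step_out hR hinit
  have henables (n : ℕ) : M.Enables (c n).1 (c n).2.2.1 (some (L14.out n)) :=
    (M.exists_lts_step_iff _ _).1 ⟨_, hc n⟩
  have hinj : Function.Injective fun n => ((c n).1, (c n).2.2.1) := by
    intro n m hnm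
    simp only [Prod.mk.injEq] at hnm
    obtain ⟨c'', hstep⟩ := (M.exists_lts_step_iff (c n) _).2 (hnm.1 ▸ hnm.2 ▸ henables m)
    exact (T14.eq_of_related_step_out hR (hcR n) hstep).symm
  exact not_injective_infinite_finite _ hinj
end
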